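/- arXiv:1807.11043 — 5 statements merged into one kernel-verified Lean document; each statement's English description precedes it below -/
import Mathlib

section
/- Let T be a tree, let S be an (a₁,…,a_k)-staircase point set, and let φ be an L-shaped embedding of T in S. Then for every box of S of size 2, it is not the case that both points of this box are images under φ of vertices of T of degree 4; in other words, no two vertices of degree 4 of T are both mapped into the same box of size 2. -/
/-- A point set: finitely many points in the plane, no two of which share
an x-coordinate or a y-coordinate. -/
def IsPointSet (S : Finset (ℝ × ℝ)) : Prop :=
  ∀ p ∈ S, ∀ q ∈ S, p ≠ q → p.1 ≠ q.1 ∧ p.2 ≠ q.2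

/-- The drawing of the edge `uv`: the union of the two axis-parallel segments
joining `φ u` and `φ v` through the corner point `c u v`. -/
def LDraw {α : Type*} (φ : α → ℝ × ℝ) (c : α → α → ℝ × ℝ) (u v : α) : Set (ℝ × ℝ) :=
  segment ℝ (φ u) (c u v) ∪ segment ℝ (c u v) (φ v)

/-- `φ` together with the corner assignment `c` is an L-shaped embedding of the
graph `G` in the point set `S`:  `φ` is an injective map of the vertices into `S`,
every edge `uv` is drawn as an `L` whose corner is `((φ u).1, (φ v).2)` or
`((φ v).1, (φ u).2)`, and the drawings of two distinct edges intersect only in the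
image `φ w` of a common endpoint `w` of the two edges. -/
def IsLEmbedding {α : Type*} (G : SimpleGraph α) (S : Finset (ℝ × ℝ))
    (φ : α → ℝ × ℝ) (c : α → α → ℝ × ℝ) : Prop :=
  Function.Injective φ ∧
  (∀ v, φ v ∈ S) ∧
  (∀ u v, c u v = c v u) ∧
  (∀ u v, G.Adj u v → c u v = ((φ u).1, (φ v).2) ∨ c u v = ((φ v).1, (φ u).2)) ∧
  (∀ u v a b, G.Adj u v → G.Adj a b → s(u, v) ≠ s(a, b) →
    ∀ p ∈ LDraw φ c u v ∩ LDraw φ c a b,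
      ∃ w, (w = u ∨ w = v) ∧ (w = a ∨ w = b) ∧ p = φ w)

/-- `G` admits an L-shaped embedding in the point set `S`. -/
def HasLEmbedding {α : Type*} (G : SimpleGraph α) (S : Finset (ℝ × ℝ)) : Prop :=
  ∃ φ c, IsLEmbedding G S φ c

/-- `box` is an `(a 0, …, a (k-1))`-staircase: the `i`-th box consists of `a i` points
with increasing x- and y-coordinates, and every point of a later box lies strictly
below and strictly to the right of every point of an earlier box. -/
def IsStaircase {k : ℕ} (a : Fin k → ℕ) (box : Fin k → Finset (ℝ × ℝ)) : Prop :=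
  (∀ i, (box i).card = a i) ∧
  (∀ i, ∀ p ∈ box i, ∀ q ∈ box i, p ≠ q → p.1 ≠ q.1 ∧ (p.1 < q.1 ↔ p.2 < q.2)) ∧
  (∀ i j : Fin k, i < j → ∀ p ∈ box i, ∀ q ∈ box j, p.1 < q.1 ∧ q.2 < p.2)

/-- The point set of a staircase: the union of its boxes. -/
noncomputable def staircaseSet {k : ℕ} (box : Fin k → Finset (ℝ × ℝ)) : Finset (ℝ × ℝ) :=
  Finset.univ.biUnion box


section Helpers

lemma seg_param (a d : ℝ × ℝ) {s t : ℝ} (h0 : 0 ≤ t) (hts : t ≤ s) (hs : 0 < s) :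
    a + t • d ∈ segment ℝ a (a + s • d) := by
  refine ⟨1 - t/s, t/s, by
      have : t/s ≤ 1 := (div_le_one hs).2 hts
      linarith, by positivity, by ring, ?_⟩
  rw [smul_add, smul_smul, div_mul_cancel₀ _ hs.ne', sub_smul, one_smul]
  abel

lemma decomp_h (p : ℝ × ℝ) (x : ℝ) : (x, p.2) = p + (x - p.1) • ((1:ℝ), (0:ℝ)) := by
  simp [Prod.ext_iff]

lemma decomp_h' (p : ℝ × ℝ) (x : ℝ) : (x, p.2) = p + (p.1 - x) • ((-1:ℝ), (0:ℝ)) := by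
  simp [Prod.ext_iff]

lemma decomp_v (p : ℝ × ℝ) (y : ℝ) : (p.1, y) = p + (y - p.2) • ((0:ℝ), (1:ℝ)) := by
  simp [Prod.ext_iff]

lemma decomp_v' (p : ℝ × ℝ) (y : ℝ) : (p.1, y) = p + (p.2 - y) • ((0:ℝ), (-1:ℝ)) := by
  simp [Prod.ext_iff]

open Classical in
/-- Direction in which the edge `uw` leaves `φ u`: 0 = right, 1 = left, 2 = up, 3 = down. -/
noncomputable def dir {α : Type*} (φ : α → ℝ × ℝ) (c : α → α → ℝ × ℝ) (u w : α) : Fin 4 :=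
  if (c u w).1 = (φ u).1 then (if (φ u).2 < (φ w).2 then 2 else 3)
  else (if (φ u).1 < (φ w).1 then 0 else 1)

lemma dir_cases {α : Type*} {φ : α → ℝ × ℝ} {c : α → α → ℝ × ℝ} {u w : α}
    (hne1 : (φ w).1 ≠ (φ u).1) (hne2 : (φ w).2 ≠ (φ u).2)
    (hcor : c u w = ((φ u).1, (φ w).2) ∨ c u w = ((φ w).1, (φ u).2)) :
    (dir φ c u w = 0 ∧ c u w = ((φ w).1, (φ u).2) ∧ (φ u).1 < (φ w).1) ∨
    (dir φ c u w = 1 ∧ c u w = ((φ w).1, (φ u).2) ∧ (φ w).1 < (φ u).1) ∨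
    (dir φ c u w = 2 ∧ c u w = ((φ u).1, (φ w).2) ∧ (φ u).2 < (φ w).2) ∨
    (dir φ c u w = 3 ∧ c u w = ((φ u).1, (φ w).2) ∧ (φ w).2 < (φ u).2) := by
  unfold dir
  rcases hcor with h | h <;> rw [h]
  · rcases lt_or_gt_of_ne hne2 with h2 | h2
    · exact Or.inr (Or.inr (Or.inr ⟨by simp [not_lt.2 h2.le], rfl, h2⟩))
    · exact Or.inr (Or.inr (Or.inl ⟨by simp [h2], rfl, h2⟩))
  · rcases lt_or_gt_of_ne hne1 with h2 | h2
    · exact Or.inr (Or.inl ⟨by simp [hne1, not_lt.2 h2.le], rfl, h2⟩)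
    · exact Or.inl ⟨by simp [hne1, h2], rfl, h2⟩

end Helpers

section Embedding

variable {α : Type*} {G : SimpleGraph α} {S : Finset (ℝ × ℝ)}
  {φ : α → ℝ × ℝ} {c : α → α → ℝ × ℝ}

lemma no_overlap (hemb : IsLEmbedding G S φ c) {u w z : α}
    (hw : G.Adj u w) (hz : G.Adj u z) (hwz : w ≠ z)
    {d : ℝ × ℝ} {s1 s2 : ℝ} (hs1 : 0 < s1) (hs2 : 0 < s2) (hd : d ≠ 0)
    (h1 : c u w = φ u + s1 • d) (h2 : c u z = φ u + s2 • d) : False := by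
  obtain ⟨hinj, hmem, hsymm, hcor, hint⟩ := hemb
  set t := min s1 s2 / 2 with ht
  have hm : 0 < min s1 s2 := lt_min hs1 hs2
  have ht0 : 0 < t := by positivity
  have ht1 : t ≤ s1 := le_trans (by rw [ht]; linarith) (min_le_left s1 s2)
  have ht2 : t ≤ s2 := le_trans (by rw [ht]; linarith) (min_le_right s1 s2)
  have hr1 : φ u + t • d ∈ segment ℝ (φ u) (c u w) := by
    rw [h1]; exact seg_param _ _ ht0.le ht1 hs1
  have hr2 : φ u + t • d ∈ segment ℝ (φ u) (c u z) := by
    rw [h2]; exact seg_param _ _ ht0.le ht2 hs2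
  have hne : s(u, w) ≠ s(u, z) := by
    intro hcon
    rcases Sym2.eq_iff.1 hcon with ⟨-, h⟩ | ⟨h1', h2'⟩
    · exact hwz h
    · exact hwz (h2'.trans h1')
  obtain ⟨w', hw1, hw2, hrw⟩ := hint u w u z hw hz hne _
    ⟨Set.mem_union_left _ hr1, Set.mem_union_left _ hr2⟩
  have hwu : w' = u := by
    rcases hw1 with h | h
    · exact h
    · rcases hw2 with h' | h'
      · exact h'
      · exact absurd (h.symm.trans h') hwz
  rw [hwu] at hrw
  rw [add_eq_left] at hrw
  exact smul_ne_zero ht0.ne' hd hrw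

lemma dir_ne (hemb : IsLEmbedding G S φ c) (hS : IsPointSet S) {u w z : α}
    (hw : G.Adj u w) (hz : G.Adj u z) (hwz : w ≠ z) :
    dir φ c u w ≠ dir φ c u z := by
  have hco : ∀ x y : α, x ≠ y → (φ x).1 ≠ (φ y).1 ∧ (φ x).2 ≠ (φ y).2 := fun x y hxy =>
    hS _ (hemb.2.1 x) _ (hemb.2.1 y) (fun h => hxy (hemb.1 h))
  have cw := dir_cases (hco w u hw.ne').1 (hco w u hw.ne').2 (hemb.2.2.2.1 u w hw)
  have cz := dir_cases (hco z u hz.ne').1 (hco z u hz.ne').2 (hemb.2.2.2.1 u z hz)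
  intro heq
  rcases cw with ⟨e1, hc1, hl1⟩ | ⟨e1, hc1, hl1⟩ | ⟨e1, hc1, hl1⟩ | ⟨e1, hc1, hl1⟩ <;>
    rcases cz with ⟨e2, hc2, hl2⟩ | ⟨e2, hc2, hl2⟩ | ⟨e2, hc2, hl2⟩ | ⟨e2, hc2, hl2⟩ <;>
    rw [e1, e2] at heq <;>
    first
    | exact absurd heq (by decide)
    | exact no_overlap ⟨hemb.1, hemb.2.1, hemb.2.2.1, hemb.2.2.2.1, hemb.2.2.2.2⟩ hw hz hwz
        (by linarith) (by linarith) (by norm_num [Prod.ext_iff])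
        (hc1.trans (decomp_h _ _)) (hc2.trans (decomp_h _ _))
    | exact no_overlap ⟨hemb.1, hemb.2.1, hemb.2.2.1, hemb.2.2.2.1, hemb.2.2.2.2⟩ hw hz hwz
        (by linarith) (by linarith) (by norm_num [Prod.ext_iff])
        (hc1.trans (decomp_h' _ _)) (hc2.trans (decomp_h' _ _))
    | exact no_overlap ⟨hemb.1, hemb.2.1, hemb.2.2.1, hemb.2.2.2.1, hemb.2.2.2.2⟩ hw hz hwz
        (by linarith) (by linarith) (by norm_num [Prod.ext_iff])
        (hc1.trans (decomp_v _ _)) (hc2.trans (decomp_v _ _))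
    | exact no_overlap ⟨hemb.1, hemb.2.1, hemb.2.2.1, hemb.2.2.2.1, hemb.2.2.2.2⟩ hw hz hwz
        (by linarith) (by linarith) (by norm_num [Prod.ext_iff])
        (hc1.trans (decomp_v' _ _)) (hc2.trans (decomp_v' _ _))

lemma dir_exists [Fintype α] (hemb : IsLEmbedding G S φ c) (hS : IsPointSet S) {u : α}
    (h4 : (G.neighborSet u).ncard = 4) (d : Fin 4) :
    ∃ w, G.Adj u w ∧ dir φ c u w = d := by
  classical
  let f : ↥(G.neighborSet u) → Fin 4 := fun w => dir φ c u w.1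
  have hinj : Function.Injective f := by
    rintro ⟨w, hw⟩ ⟨z, hz⟩ h
    by_contra hne
    exact dir_ne hemb hS hw hz (by simpa using hne) h
  have hcard : Nat.card ↥(G.neighborSet u) = Nat.card (Fin 4) := by
    rw [Nat.card_coe_set_eq, h4]
    simp
  have hbij := (Nat.bijective_iff_injective_and_card f).2 ⟨hinj, hcard⟩
  obtain ⟨⟨w, hw⟩, hfw⟩ := hbij.2 d
  exact ⟨w, hw, hfw⟩

end Embedding

section Main

variable {α : Type*} {G : SimpleGraph α} {S : Finset (ℝ × ℝ)}
  {φ : α → ℝ × ℝ} {c : α → α → ℝ × ℝ}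

lemma staircase_isPointSet {k : ℕ} {a : Fin k → ℕ} {box : Fin k → Finset (ℝ × ℝ)}
    (hbox : IsStaircase a box) : IsPointSet (staircaseSet box) := by
  rintro p hp q hq hpq
  obtain ⟨i, -, hpi⟩ := Finset.mem_biUnion.1 hp
  obtain ⟨j, -, hqj⟩ := Finset.mem_biUnion.1 hq
  rcases lt_trichotomy i j with h | h | h
  · have h1 := hbox.2.2 i j h p hpi q hqj
    exact ⟨h1.1.ne, h1.2.ne'⟩
  · subst h
    have h1 := hbox.2.1 i p hpi q hqj hpq
    refine ⟨h1.1, fun h2 => ?_⟩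
    have h3 := hbox.2.1 i q hqj p hpi (Ne.symm hpq)
    rcases lt_or_gt_of_ne h1.1 with hlt | hlt
    · exact absurd (h1.2.mp hlt) (by rw [h2]; exact lt_irrefl _)
    · exact absurd (h3.2.mp hlt) (by rw [h2]; exact lt_irrefl _)
  · have h1 := hbox.2.2 j i h q hqj p hpi
    exact ⟨h1.1.ne', h1.2.ne⟩

lemma main_aux [Fintype α]
    (hemb : IsLEmbedding G S φ c) (hS : IsPointSet S) {u v : α}
    (hx : (φ u).1 < (φ v).1) (hy : (φ u).2 < (φ v).2)
    (hdu : (G.neighborSet u).ncard = 4) (hdv : (G.neighborSet v).ncard = 4)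
    (hclass : ∀ w : α, φ w ≠ φ u → φ w ≠ φ v →
      ((φ w).1 < (φ u).1 ∧ (φ v).2 < (φ w).2) ∨
      ((φ v).1 < (φ w).1 ∧ (φ w).2 < (φ u).2)) :
    False := by
  obtain ⟨hinj, hmem, hsymm, hcor, hint⟩ := id hemb
  have hco : ∀ x y : α, x ≠ y → (φ x).1 ≠ (φ y).1 ∧ (φ x).2 ≠ (φ y).2 := fun x y hxy =>
    hS _ (hmem x) _ (hmem y) (fun h => hxy (hinj h))
  have huv : u ≠ v := fun h => absurd (h ▸ hx) (lt_irrefl _)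
  obtain ⟨wR, haR, hdR⟩ := dir_exists hemb hS hdu 0
  obtain ⟨wU, haU, hdU⟩ := dir_exists hemb hS hdu 2
  obtain ⟨wL, haL, hdL⟩ := dir_exists hemb hS hdv 1
  obtain ⟨wD, haD, hdD⟩ := dir_exists hemb hS hdv 3
  have hcR : c u wR = ((φ wR).1, (φ u).2) ∧ (φ u).1 < (φ wR).1 := by
    rcases dir_cases (hco wR u haR.ne').1 (hco wR u haR.ne').2 (hcor u wR haR) with
      ⟨e, h1, h2⟩ | ⟨e, h1, h2⟩ | ⟨e, h1, h2⟩ | ⟨e, h1, h2⟩ <;>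
      first
      | exact ⟨h1, h2⟩
      | (rw [hdR] at e; exact absurd e (by decide))
  have hcU : c u wU = ((φ u).1, (φ wU).2) ∧ (φ u).2 < (φ wU).2 := by
    rcases dir_cases (hco wU u haU.ne').1 (hco wU u haU.ne').2 (hcor u wU haU) with
      ⟨e, h1, h2⟩ | ⟨e, h1, h2⟩ | ⟨e, h1, h2⟩ | ⟨e, h1, h2⟩ <;>
      first
      | exact ⟨h1, h2⟩
      | (rw [hdU] at e; exact absurd e (by decide))
  have hcL : c v wL = ((φ wL).1, (φ v).2) ∧ (φ wL).1 < (φ v).1 := by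
    rcases dir_cases (hco wL v haL.ne').1 (hco wL v haL.ne').2 (hcor v wL haL) with
      ⟨e, h1, h2⟩ | ⟨e, h1, h2⟩ | ⟨e, h1, h2⟩ | ⟨e, h1, h2⟩ <;>
      first
      | exact ⟨h1, h2⟩
      | (rw [hdL] at e; exact absurd e (by decide))
  have hcD : c v wD = ((φ v).1, (φ wD).2) ∧ (φ wD).2 < (φ v).2 := by
    rcases dir_cases (hco wD v haD.ne').1 (hco wD v haD.ne').2 (hcor v wD haD) with
      ⟨e, h1, h2⟩ | ⟨e, h1, h2⟩ | ⟨e, h1, h2⟩ | ⟨e, h1, h2⟩ <;>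
      first
      | exact ⟨h1, h2⟩
      | (rw [hdD] at e; exact absurd e (by decide))
  -- classify the image of wR
  have hclR : wR = v ∨ ((φ v).1 < (φ wR).1 ∧ (φ wR).2 < (φ u).2) := by
    by_cases h : wR = v
    · exact Or.inl h
    · have h1 : φ wR ≠ φ u := fun he => haR.ne' (hinj he)
      have h2 : φ wR ≠ φ v := fun he => h (hinj he)
      rcases hclass wR h1 h2 with ⟨ha, hb⟩ | hh
      · exact absurd hcR.2 (lt_asymm ha)
      · exact Or.inr hh
  rcases hclR with hRv | hRd
  · -- Case 1: the right edge of u goes to v, corner (q.1, p.2)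
    subst hRv
    have hwUv : wU ≠ wR := by
      intro h
      rw [h, hdR] at hdU
      exact absurd hdU (by decide)
    -- wU lies up-left
    have hULU : (φ wU).1 < (φ u).1 ∧ (φ wR).2 < (φ wU).2 := by
      have h1 : φ wU ≠ φ u := fun he => haU.ne' (hinj he)
      have h2 : φ wU ≠ φ wR := fun he => hwUv (hinj he)
      rcases hclass wU h1 h2 with hh | ⟨ha, hb⟩
      · exact hh
      · exact absurd hcU.2 (lt_asymm hb)
    -- wL ≠ u
    have hwLu : wL ≠ u := by
      intro h
      rcases dir_cases (hco u wR huv).1 (hco u wR huv).2 (hcor wR u haR.symm) with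
        ⟨e, h1, -⟩ | ⟨e, h1, -⟩ | ⟨e, h1, -⟩ | ⟨e, h1, -⟩
      · have h2 := ((hsymm wR u).trans hcR.1).symm.trans h1
        exact hx.ne' ((Prod.ext_iff.1 h2).1)
      · have h2 := ((hsymm wR u).trans hcR.1).symm.trans h1
        exact hx.ne' ((Prod.ext_iff.1 h2).1)
      · rw [h, e] at hdL
        exact absurd hdL (by decide)
      · rw [h, e] at hdL
        exact absurd hdL (by decide)
    -- wL lies up-left
    have hULL : (φ wL).1 < (φ u).1 ∧ (φ wR).2 < (φ wL).2 := by
      have h1 : φ wL ≠ φ u := fun he => hwLu (hinj he)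
      have h2 : φ wL ≠ φ wR := fun he => haL.ne' (hinj he)
      rcases hclass wL h1 h2 with hh | ⟨ha, hb⟩
      · exact hh
      · exact absurd hcL.2 (lt_asymm ha)
    -- the point (p.1, q.2) lies on both the up-edge of u and the left-edge of v
    have hsegU : (((φ u).1 : ℝ), (φ wR).2) ∈ segment ℝ (φ u) (c u wU) := by
      have e1 : (((φ u).1 : ℝ), (φ wR).2)
          = φ u + ((φ wR).2 - (φ u).2) • ((0:ℝ), (1:ℝ)) := decomp_v _ _
      have e2 : c u wU = φ u + ((φ wU).2 - (φ u).2) • ((0:ℝ), (1:ℝ)) :=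
        hcU.1.trans (decomp_v _ _)
      rw [e1, e2]
      exact seg_param _ _ (by linarith) (by linarith [hULU.2]) (by linarith [hcU.2])
    have hsegL : (((φ u).1 : ℝ), (φ wR).2) ∈ segment ℝ (φ wR) (c wR wL) := by
      have e1 : (((φ u).1 : ℝ), (φ wR).2)
          = φ wR + ((φ wR).1 - (φ u).1) • ((-1:ℝ), (0:ℝ)) := decomp_h' _ _
      have e2 : c wR wL = φ wR + ((φ wR).1 - (φ wL).1) • ((-1:ℝ), (0:ℝ)) :=
        hcL.1.trans (decomp_h' _ _)
      rw [e1, e2]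
      exact seg_param _ _ (by linarith) (by linarith [hULL.1]) (by linarith [hcL.2])
    have hneS : s(u, wU) ≠ s(wR, wL) := by
      intro hcon
      rcases Sym2.eq_iff.1 hcon with ⟨h1, h2⟩ | ⟨h1, h2⟩
      · exact huv h1
      · exact hwLu h1.symm
    obtain ⟨w', h1, h2, hrw⟩ := hint u wU wR wL haU haL hneS _
      ⟨Set.mem_union_left _ hsegU, Set.mem_union_left _ hsegL⟩
    rcases h1 with h1 | h1
    · rw [h1] at hrw
      have h5 : (φ wR).2 = (φ u).2 := by simpa using congrArg Prod.snd hrw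
      linarith
    · rw [h1] at hrw
      rcases h2 with h2 | h2
      · exact hwUv (h1.symm.trans h2)
      · have h5 : (φ u).1 = (φ wL).1 := by
          rw [h1.symm.trans h2] at hrw
          simpa using congrArg Prod.fst hrw
        linarith [hULL.1]
  · -- Case 2: wR lies down-right of both
    have hwRv : wR ≠ v := by
      intro h
      rw [h] at hRd
      exact lt_irrefl _ hRd.1
    have hwDu : wD ≠ u := by
      intro h
      rw [h] at hcD haD
      rcases dir_cases (hco v u huv.symm).1 (hco v u huv.symm).2 (hcor u v haD.symm) with
        ⟨e, h1, hl⟩ | ⟨e, h1, hl⟩ | ⟨e, h1, hl⟩ | ⟨e, h1, hl⟩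
      · exact dir_ne hemb hS haD.symm haR (Ne.symm hwRv) (e.trans hdR.symm)
      · exact absurd hl (lt_asymm hx)
      · have h2 := (((hsymm u v).trans hcD.1).symm.trans h1)
        exact hx.ne' ((Prod.ext_iff.1 h2).1)
      · have h2 := (((hsymm u v).trans hcD.1).symm.trans h1)
        exact hx.ne' ((Prod.ext_iff.1 h2).1)
    -- wD lies down-right
    have hDd : (φ v).1 < (φ wD).1 ∧ (φ wD).2 < (φ u).2 := by
      have h1 : φ wD ≠ φ u := fun he => hwDu (hinj he)
      have h2 : φ wD ≠ φ v := fun he => haD.ne' (hinj he)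
      rcases hclass wD h1 h2 with ⟨ha, hb⟩ | hh
      · exact absurd hcD.2 (lt_asymm hb)
      · exact hh
    -- the point (q.1, p.2) lies on both the right-edge of u and the down-edge of v
    have hsegR : (((φ v).1 : ℝ), (φ u).2) ∈ segment ℝ (φ u) (c u wR) := by
      have e1 : (((φ v).1 : ℝ), (φ u).2)
          = φ u + ((φ v).1 - (φ u).1) • ((1:ℝ), (0:ℝ)) := decomp_h _ _
      have e2 : c u wR = φ u + ((φ wR).1 - (φ u).1) • ((1:ℝ), (0:ℝ)) :=
        hcR.1.trans (decomp_h _ _)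
      rw [e1, e2]
      exact seg_param _ _ (by linarith) (by linarith [hRd.1]) (by linarith [hcR.2])
    have hsegD : (((φ v).1 : ℝ), (φ u).2) ∈ segment ℝ (φ v) (c v wD) := by
      have e1 : (((φ v).1 : ℝ), (φ u).2)
          = φ v + ((φ v).2 - (φ u).2) • ((0:ℝ), (-1:ℝ)) := decomp_v' _ _
      have e2 : c v wD = φ v + ((φ v).2 - (φ wD).2) • ((0:ℝ), (-1:ℝ)) :=
        hcD.1.trans (decomp_v' _ _)
      rw [e1, e2]
      exact seg_param _ _ (by linarith) (by linarith [hDd.2]) (by linarith [hcD.2])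
    have hneS : s(u, wR) ≠ s(v, wD) := by
      intro hcon
      rcases Sym2.eq_iff.1 hcon with ⟨h1, h2⟩ | ⟨h1, h2⟩
      · exact huv h1
      · exact hwDu h1.symm
    obtain ⟨w', h1, h2, hrw⟩ := hint u wR v wD haR haD hneS _
      ⟨Set.mem_union_left _ hsegR, Set.mem_union_left _ hsegD⟩
    rcases h1 with h1 | h1
    · rw [h1] at hrw
      have h5 : (φ v).1 = (φ u).1 := by simpa using congrArg Prod.fst hrw
      linarith
    · rw [h1] at hrw
      have h5 : (φ u).2 = (φ wR).2 := by simpa using congrArg Prod.snd hrw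
      linarith [hRd.2]
end Main
/-- Key lemma: in an L-shaped embedding of a tree in a staircase point set, no two
degree-4 vertices are both mapped into the same box of size 2. -/
theorem no_two_degree_four_in_size_two_box {α : Type*} [Fintype α]
    (G : SimpleGraph α) (hG : G.IsTree)
    {k : ℕ} (a : Fin k → ℕ) (box : Fin k → Finset (ℝ × ℝ))
    (hbox : IsStaircase a box)
    (φ : α → ℝ × ℝ) (c : α → α → ℝ × ℝ)
    (hemb : IsLEmbedding G (staircaseSet box) φ c) :
    ∀ i, (box i).card = 2 →
      ¬ ∃ u v : α, u ≠ v ∧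
        (G.neighborSet u).ncard = 4 ∧ (G.neighborSet v).ncard = 4 ∧
        φ u ∈ box i ∧ φ v ∈ box i := by

  intro i hcard
  rintro ⟨u, v, huv, hdu, hdv, hpu, hpv⟩
  have hS := staircase_isPointSet hbox
  have hne : φ u ≠ φ v := fun h => huv (hemb.1 h)
  have hpair := hbox.2.1 i (φ u) hpu (φ v) hpv hne
  have hbi : box i = {φ u, φ v} := by
    have hsub : ({φ u, φ v} : Finset (ℝ × ℝ)) ⊆ box i := by
      intro x hx
      rcases Finset.mem_insert.1 hx with rfl | hx
      · exact hpu
      · rw [Finset.mem_singleton.1 hx]; exact hpv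
    exact (Finset.eq_of_subset_of_card_le hsub
      (by rw [hcard, Finset.card_pair hne])).symm
  have hclassgen : ∀ w : α, φ w ≠ φ u → φ w ≠ φ v →
      ((φ w).1 < (φ u).1 ∧ (φ w).1 < (φ v).1 ∧ (φ u).2 < (φ w).2 ∧ (φ v).2 < (φ w).2) ∨
      ((φ u).1 < (φ w).1 ∧ (φ v).1 < (φ w).1 ∧ (φ w).2 < (φ u).2 ∧ (φ w).2 < (φ v).2) := by
    intro w h1 h2
    have hwS : φ w ∈ staircaseSet box := hemb.2.1 w
    obtain ⟨j, -, hj⟩ := Finset.mem_biUnion.1 hwS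
    have hji : j ≠ i := by
      intro h
      rw [h, hbi] at hj
      rcases Finset.mem_insert.1 hj with h' | h'
      · exact h1 h'
      · exact h2 (Finset.mem_singleton.1 h')
    rcases lt_or_gt_of_ne hji with h | h
    · have g1 := hbox.2.2 j i h (φ w) hj (φ u) hpu
      have g2 := hbox.2.2 j i h (φ w) hj (φ v) hpv
      exact Or.inl ⟨g1.1, g2.1, g1.2, g2.2⟩
    · have g1 := hbox.2.2 i j h (φ u) hpu (φ w) hj
      have g2 := hbox.2.2 i j h (φ v) hpv (φ w) hj
      exact Or.inr ⟨g1.1, g2.1, g1.2, g2.2⟩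
  rcases lt_or_gt_of_ne hpair.1 with hx | hx
  · have hy : (φ u).2 < (φ v).2 := hpair.2.mp hx
    exact main_aux hemb hS hx hy hdu hdv (fun w h1 h2 =>
      (hclassgen w h1 h2).imp (fun h => ⟨h.1, h.2.2.2⟩) (fun h => ⟨h.2.1, h.2.2.1⟩))
  · have hpair' := hbox.2.1 i (φ v) hpv (φ u) hpu (Ne.symm hne)
    have hy : (φ v).2 < (φ u).2 := hpair'.2.mp hx
    exact main_aux hemb hS hx hy hdv hdu (fun w h1 h2 =>
      (hclassgen w h2 h1).imp (fun h => ⟨h.2.1, h.2.2.1⟩) (fun h => ⟨h.1, h.2.2.2⟩))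
end

section
/- In every L-shaped embedding of the tree T₁₃ in the point set S₁₃, none of the four vertices Y, X₁, X₂, X₃ is mapped to a point of the leftmost box B₋₃ or of the rightmost box B₃ of S₁₃. -/
/-- Parent function of the tree `T₁₃`: vertex `0` is the central vertex `Y`,
vertices `1, 2, 3` are the degree-4 vertices `X₁, X₂, X₃` (children of `Y`),
and vertices `3i+1, 3i+2, 3i+3` are the three leaves adjacent to `Xᵢ`. -/
def T13Par (m : ℕ) : ℕ := if m ≤ 3 then 0 else (m - 4) / 3 + 1

/-- The tree `T₁₃` on 13 vertices: a vertex `Y` (vertex `0`) adjacent to three vertices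
`X₁, X₂, X₃` (vertices `1, 2, 3`), each of which is additionally adjacent to three leaves. -/
def T13 : SimpleGraph (Fin 13) where
  Adj a b := a ≠ b ∧ (T13Par a.val = b.val ∨ T13Par b.val = a.val)
  symm := ⟨fun a b h => ⟨h.1.symm, h.2.symm⟩⟩
  loopless := ⟨fun a h => h.1 rfl⟩

section Aux

variable {α : Type*} {G : SimpleGraph α} {S : Finset (ℝ × ℝ)}
  {φ : α → ℝ × ℝ} {c : α → α → ℝ × ℝ}

lemma real_mem_segment {a b d : ℝ} (h : a ≤ b ∧ b ≤ d ∨ d ≤ b ∧ b ≤ a) :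
    b ∈ segment ℝ a d := by
  rcases h with ⟨h1, h2⟩ | ⟨h1, h2⟩
  · rw [segment_eq_Icc (h1.trans h2)]; exact ⟨h1, h2⟩
  · rw [segment_symm, segment_eq_Icc (h1.trans h2)]; exact ⟨h1, h2⟩

lemma pair_mem_seg_h {x0 x1 x2 y : ℝ} (h : x1 ∈ segment ℝ x0 x2) :
    ((x1, y) : ℝ × ℝ) ∈ segment ℝ (x0, y) (x2, y) := by
  obtain ⟨a, b, ha, hb, hab, hx⟩ := h
  refine ⟨a, b, ha, hb, hab, ?_⟩
  have h2 : a * y + b * y = y := by rw [← add_mul, hab, one_mul]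
  simp only [Prod.smul_mk, smul_eq_mul, Prod.mk_add_mk]
  simp only [smul_eq_mul] at hx
  rw [hx, h2]

lemma pair_mem_seg_v {y0 y1 y2 x : ℝ} (h : y1 ∈ segment ℝ y0 y2) :
    ((x, y1) : ℝ × ℝ) ∈ segment ℝ (x, y0) (x, y2) := by
  obtain ⟨a, b, ha, hb, hab, hy⟩ := h
  refine ⟨a, b, ha, hb, hab, ?_⟩
  have h2 : a * x + b * x = x := by rw [← add_mul, hab, one_mul]
  simp only [Prod.smul_mk, smul_eq_mul, Prod.mk_add_mk]
  simp only [smul_eq_mul] at hy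
  rw [hy, h2]

lemma coords_ne (hpt : IsPointSet S) (hemb : IsLEmbedding G S φ c)
    {u v : α} (huv : u ≠ v) : (φ u).1 ≠ (φ v).1 ∧ (φ u).2 ≠ (φ v).2 := by
  obtain ⟨hinj, hS, -, -, -⟩ := hemb
  exact hpt _ (hS u) _ (hS v) (fun e => huv (hinj e))

lemma corner_ne (hpt : IsPointSet S) (hemb : IsLEmbedding G S φ c)
    {u v : α} (huv : G.Adj u v) : c u v ≠ φ u ∧ c u v ≠ φ v := by
  have hxy := coords_ne hpt hemb huv.ne
  rcases hemb.2.2.2.1 u v huv with h | h <;> rw [h] <;> constructor <;> intro e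
  · exact hxy.2 (Prod.ext_iff.mp e).2.symm
  · exact hxy.1 (Prod.ext_iff.mp e).1
  · exact hxy.1 (Prod.ext_iff.mp e).1.symm
  · exact hxy.2 (Prod.ext_iff.mp e).2

lemma corner_sep (hpt : IsPointSet S) (hemb : IsLEmbedding G S φ c)
    {u v w : α} (huv : G.Adj u v) (huw : G.Adj u w) (hvw : v ≠ w)
    (hm : c u v ∈ LDraw φ c u w) : False := by
  have hmuv : c u v ∈ LDraw φ c u v := Or.inl (right_mem_segment ℝ _ _)
  have hne : s(u, v) ≠ s(u, w) := by
    intro h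
    rcases Sym2.eq_iff.mp h with ⟨-, h2⟩ | ⟨-, h2⟩
    · exact hvw h2
    · exact huv.ne h2.symm
  obtain ⟨z, hz1, -, hz⟩ := hemb.2.2.2.2 u v u w huv huw hne _ ⟨hmuv, hm⟩
  have hc := corner_ne hpt hemb huv
  rcases hz1 with rfl | rfl
  · exact hc.1 hz
  · exact hc.2 hz

lemma overlapH (hpt : IsPointSet S) (hemb : IsLEmbedding G S φ c)
    {u v w : α} (huv : G.Adj u v) (huw : G.Adj u w) (hvw : v ≠ w)
    (h1 : c u v = ((φ v).1, (φ u).2)) (h2 : c u w = ((φ w).1, (φ u).2))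
    (hside : ((φ v).1 < (φ u).1 ∧ (φ w).1 < (φ u).1) ∨
      ((φ u).1 < (φ v).1 ∧ (φ u).1 < (φ w).1)) : False := by
  rcases le_total (φ w).1 (φ v).1 with hle | hle
  · rcases hside with ⟨l1, l2⟩ | ⟨r1, r2⟩
    · exact corner_sep hpt hemb huv huw hvw (Or.inl (by
        rw [h1, h2, show φ u = ((φ u).1, (φ u).2) from rfl]
        exact pair_mem_seg_h (real_mem_segment (Or.inr ⟨hle, l1.le⟩))))
    · exact corner_sep hpt hemb huw huv hvw.symm (Or.inl (by
        rw [h1, h2, show φ u = ((φ u).1, (φ u).2) from rfl]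
        exact pair_mem_seg_h (real_mem_segment (Or.inl ⟨r2.le, hle⟩))))
  · rcases hside with ⟨l1, l2⟩ | ⟨r1, r2⟩
    · exact corner_sep hpt hemb huw huv hvw.symm (Or.inl (by
        rw [h1, h2, show φ u = ((φ u).1, (φ u).2) from rfl]
        exact pair_mem_seg_h (real_mem_segment (Or.inr ⟨hle, l2.le⟩))))
    · exact corner_sep hpt hemb huv huw hvw (Or.inl (by
        rw [h1, h2, show φ u = ((φ u).1, (φ u).2) from rfl]
        exact pair_mem_seg_h (real_mem_segment (Or.inl ⟨r1.le, hle⟩))))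

lemma overlapV (hpt : IsPointSet S) (hemb : IsLEmbedding G S φ c)
    {u v w : α} (huv : G.Adj u v) (huw : G.Adj u w) (hvw : v ≠ w)
    (h1 : c u v = ((φ u).1, (φ v).2)) (h2 : c u w = ((φ u).1, (φ w).2))
    (hside : ((φ v).2 < (φ u).2 ∧ (φ w).2 < (φ u).2) ∨
      ((φ u).2 < (φ v).2 ∧ (φ u).2 < (φ w).2)) : False := by
  rcases le_total (φ w).2 (φ v).2 with hle | hle
  · rcases hside with ⟨l1, l2⟩ | ⟨r1, r2⟩
    · exact corner_sep hpt hemb huv huw hvw (Or.inl (by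
        rw [h1, h2, show φ u = ((φ u).1, (φ u).2) from rfl]
        exact pair_mem_seg_v (real_mem_segment (Or.inr ⟨hle, l1.le⟩))))
    · exact corner_sep hpt hemb huw huv hvw.symm (Or.inl (by
        rw [h1, h2, show φ u = ((φ u).1, (φ u).2) from rfl]
        exact pair_mem_seg_v (real_mem_segment (Or.inl ⟨r2.le, hle⟩))))
  · rcases hside with ⟨l1, l2⟩ | ⟨r1, r2⟩
    · exact corner_sep hpt hemb huw huv hvw.symm (Or.inl (by
        rw [h1, h2, show φ u = ((φ u).1, (φ u).2) from rfl]
        exact pair_mem_seg_v (real_mem_segment (Or.inr ⟨hle, l2.le⟩))))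
    · exact corner_sep hpt hemb huv huw hvw (Or.inl (by
        rw [h1, h2, show φ u = ((φ u).1, (φ u).2) from rfl]
        exact pair_mem_seg_v (real_mem_segment (Or.inl ⟨r1.le, hle⟩))))

/-- The direction in which the edge `uv` leaves `u`:
`0` = left, `1` = right, `2` = down, `3` = up. -/
noncomputable def LDir (φ : α → ℝ × ℝ) (c : α → α → ℝ × ℝ) (u v : α) : Fin 4 := by
  classical
  exact if c u v = ((φ v).1, (φ u).2) then (if (φ v).1 < (φ u).1 then 0 else 1)
    else (if (φ v).2 < (φ u).2 then 2 else 3)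

lemma LDir_spec (hpt : IsPointSet S) (hemb : IsLEmbedding G S φ c)
    {u v : α} (huv : G.Adj u v) :
    (LDir φ c u v = 0 ∧ c u v = ((φ v).1, (φ u).2) ∧ (φ v).1 < (φ u).1) ∨
    (LDir φ c u v = 1 ∧ c u v = ((φ v).1, (φ u).2) ∧ (φ u).1 < (φ v).1) ∨
    (LDir φ c u v = 2 ∧ c u v = ((φ u).1, (φ v).2) ∧ (φ v).2 < (φ u).2) ∨
    (LDir φ c u v = 3 ∧ c u v = ((φ u).1, (φ v).2) ∧ (φ u).2 < (φ v).2) := by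
  have hxy := coords_ne hpt hemb huv.ne
  unfold LDir
  split_ifs with hA hB hC
  · exact Or.inl ⟨rfl, hA, hB⟩
  · exact Or.inr (Or.inl ⟨rfl, hA, lt_of_le_of_ne (not_lt.mp hB) hxy.1⟩)
  · exact Or.inr (Or.inr (Or.inl ⟨rfl, (hemb.2.2.2.1 u v huv).resolve_right hA, hC⟩))
  · exact Or.inr (Or.inr (Or.inr ⟨rfl, (hemb.2.2.2.1 u v huv).resolve_right hA,
      lt_of_le_of_ne (not_lt.mp hC) hxy.2⟩))

lemma LDir_zero (hpt : IsPointSet S) (hemb : IsLEmbedding G S φ c)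
    {u v : α} (huv : G.Adj u v) (h : LDir φ c u v = 0) : (φ v).1 < (φ u).1 := by
  rcases LDir_spec hpt hemb huv with ⟨e, -, l⟩ | ⟨e, -, l⟩ | ⟨e, -, l⟩ | ⟨e, -, l⟩
  · exact l
  all_goals (rw [e] at h; exact absurd h (by decide))

lemma LDir_one (hpt : IsPointSet S) (hemb : IsLEmbedding G S φ c)
    {u v : α} (huv : G.Adj u v) (h : LDir φ c u v = 1) : (φ u).1 < (φ v).1 := by
  rcases LDir_spec hpt hemb huv with ⟨e, -, l⟩ | ⟨e, -, l⟩ | ⟨e, -, l⟩ | ⟨e, -, l⟩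
  · rw [e] at h; exact absurd h (by decide)
  · exact l
  all_goals (rw [e] at h; exact absurd h (by decide))

lemma LDir_two (hpt : IsPointSet S) (hemb : IsLEmbedding G S φ c)
    {u v : α} (huv : G.Adj u v) (h : LDir φ c u v = 2) : (φ v).2 < (φ u).2 := by
  rcases LDir_spec hpt hemb huv with ⟨e, -, l⟩ | ⟨e, -, l⟩ | ⟨e, -, l⟩ | ⟨e, -, l⟩
  · rw [e] at h; exact absurd h (by decide)
  · rw [e] at h; exact absurd h (by decide)
  · exact l
  · rw [e] at h; exact absurd h (by decide)

lemma LDir_three (hpt : IsPointSet S) (hemb : IsLEmbedding G S φ c)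
    {u v : α} (huv : G.Adj u v) (h : LDir φ c u v = 3) : (φ u).2 < (φ v).2 := by
  rcases LDir_spec hpt hemb huv with ⟨e, -, l⟩ | ⟨e, -, l⟩ | ⟨e, -, l⟩ | ⟨e, -, l⟩
  · rw [e] at h; exact absurd h (by decide)
  · rw [e] at h; exact absurd h (by decide)
  · rw [e] at h; exact absurd h (by decide)
  · exact l

lemma LDir_injAt (hpt : IsPointSet S) (hemb : IsLEmbedding G S φ c)
    {u v w : α} (huv : G.Adj u v) (huw : G.Adj u w) (hvw : v ≠ w)
    (h : LDir φ c u v = LDir φ c u w) : False := by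
  rcases LDir_spec hpt hemb huv with ⟨e1, c1, l1⟩ | ⟨e1, c1, l1⟩ | ⟨e1, c1, l1⟩ | ⟨e1, c1, l1⟩ <;>
    rcases LDir_spec hpt hemb huw with ⟨e2, c2, l2⟩ | ⟨e2, c2, l2⟩ | ⟨e2, c2, l2⟩ | ⟨e2, c2, l2⟩ <;>
    first
      | (rw [e1, e2] at h; exact absurd h (by decide))
      | exact overlapH hpt hemb huv huw hvw c1 c2 (Or.inl ⟨l1, l2⟩)
      | exact overlapH hpt hemb huv huw hvw c1 c2 (Or.inr ⟨l1, l2⟩)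
      | exact overlapV hpt hemb huv huw hvw c1 c2 (Or.inl ⟨l1, l2⟩)
      | exact overlapV hpt hemb huv huw hvw c1 c2 (Or.inr ⟨l1, l2⟩)

lemma four_dirs (hpt : IsPointSet S) (hemb : IsLEmbedding G S φ c)
    {u n1 n2 n3 n4 : α} (h12 : n1 ≠ n2) (h13 : n1 ≠ n3) (h14 : n1 ≠ n4)
    (h23 : n2 ≠ n3) (h24 : n2 ≠ n4) (h34 : n3 ≠ n4)
    (a1 : G.Adj u n1) (a2 : G.Adj u n2) (a3 : G.Adj u n3) (a4 : G.Adj u n4)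
    (d0 : Fin 4)
    (f1 : LDir φ c u n1 ≠ d0) (f2 : LDir φ c u n2 ≠ d0)
    (f3 : LDir φ c u n3 ≠ d0) (f4 : LDir φ c u n4 ≠ d0) : False := by
  have q12 : (LDir φ c u n1).val ≠ (LDir φ c u n2).val :=
    fun e => LDir_injAt hpt hemb a1 a2 h12 (Fin.ext e)
  have q13 : (LDir φ c u n1).val ≠ (LDir φ c u n3).val :=
    fun e => LDir_injAt hpt hemb a1 a3 h13 (Fin.ext e)
  have q14 : (LDir φ c u n1).val ≠ (LDir φ c u n4).val :=
    fun e => LDir_injAt hpt hemb a1 a4 h14 (Fin.ext e)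
  have q23 : (LDir φ c u n2).val ≠ (LDir φ c u n3).val :=
    fun e => LDir_injAt hpt hemb a2 a3 h23 (Fin.ext e)
  have q24 : (LDir φ c u n2).val ≠ (LDir φ c u n4).val :=
    fun e => LDir_injAt hpt hemb a2 a4 h24 (Fin.ext e)
  have q34 : (LDir φ c u n3).val ≠ (LDir φ c u n4).val :=
    fun e => LDir_injAt hpt hemb a3 a4 h34 (Fin.ext e)
  have g1 : (LDir φ c u n1).val ≠ d0.val := fun e => f1 (Fin.ext e)
  have g2 : (LDir φ c u n2).val ≠ d0.val := fun e => f2 (Fin.ext e)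
  have g3 : (LDir φ c u n3).val ≠ d0.val := fun e => f3 (Fin.ext e)
  have g4 : (LDir φ c u n4).val ≠ d0.val := fun e => f4 (Fin.ext e)
  have b1 := (LDir φ c u n1).isLt
  have b2 := (LDir φ c u n2).isLt
  have b3 := (LDir φ c u n3).isLt
  have b4 := (LDir φ c u n4).isLt
  have b0 := d0.isLt
  omega

lemma three_dirs (hpt : IsPointSet S) (hemb : IsLEmbedding G S φ c)
    {u n1 n2 n3 : α} (h12 : n1 ≠ n2) (h13 : n1 ≠ n3) (h23 : n2 ≠ n3)
    (a1 : G.Adj u n1) (a2 : G.Adj u n2) (a3 : G.Adj u n3)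
    (d0 t : Fin 4) (hdt : d0 ≠ t)
    (f1 : LDir φ c u n1 ≠ d0) (f2 : LDir φ c u n2 ≠ d0) (f3 : LDir φ c u n3 ≠ d0)
    (g1 : LDir φ c u n1 ≠ t) (g2 : LDir φ c u n2 ≠ t) (g3 : LDir φ c u n3 ≠ t) :
    False := by
  have q12 : (LDir φ c u n1).val ≠ (LDir φ c u n2).val :=
    fun e => LDir_injAt hpt hemb a1 a2 h12 (Fin.ext e)
  have q13 : (LDir φ c u n1).val ≠ (LDir φ c u n3).val :=
    fun e => LDir_injAt hpt hemb a1 a3 h13 (Fin.ext e)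
  have q23 : (LDir φ c u n2).val ≠ (LDir φ c u n3).val :=
    fun e => LDir_injAt hpt hemb a2 a3 h23 (Fin.ext e)
  have r1 : (LDir φ c u n1).val ≠ d0.val := fun e => f1 (Fin.ext e)
  have r2 : (LDir φ c u n2).val ≠ d0.val := fun e => f2 (Fin.ext e)
  have r3 : (LDir φ c u n3).val ≠ d0.val := fun e => f3 (Fin.ext e)
  have s1 : (LDir φ c u n1).val ≠ t.val := fun e => g1 (Fin.ext e)
  have s2 : (LDir φ c u n2).val ≠ t.val := fun e => g2 (Fin.ext e)
  have s3 : (LDir φ c u n3).val ≠ t.val := fun e => g3 (Fin.ext e)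
  have rdt : d0.val ≠ t.val := fun e => hdt (Fin.ext e)
  have b1 := (LDir φ c u n1).isLt
  have b2 := (LDir φ c u n2).isLt
  have b3 := (LDir φ c u n3).isLt
  have b0 := d0.isLt
  have bt := t.isLt
  omega

end Aux

section Core

lemma t13_adj {a b : Fin 13}
    (h : a ≠ b ∧ (T13Par a.val = b.val ∨ T13Par b.val = a.val)) : T13.Adj a b := h



/-- Core combinatorial lemma: if `P, Q` are two points such that no edge can leave a
vertex placed at `P` in direction `d0`, no edge can leave a vertex placed at `Q` in
direction `d1`, an edge leaving `P` in direction `d1` must end at `Q`, and an edge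
leaving `Q` in direction `d0` must end at `P`, then none of the vertices `0,1,2,3`
of `T₁₃` can be placed at `P` or `Q`. -/
lemma T13_core {S : Finset (ℝ × ℝ)} {φ : Fin 13 → ℝ × ℝ} {c : Fin 13 → Fin 13 → ℝ × ℝ}
    (hpt : IsPointSet S) (hemb : IsLEmbedding T13 S φ c)
    (P Q : ℝ × ℝ) (d0 d1 : Fin 4) (hd : d0 ≠ d1)
    (hPd0 : ∀ u v, T13.Adj u v → φ u = P → LDir φ c u v ≠ d0)
    (hQd1 : ∀ u v, T13.Adj u v → φ u = Q → LDir φ c u v ≠ d1)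
    (hPd1 : ∀ u v, T13.Adj u v → φ u = P → LDir φ c u v = d1 → φ v = Q)
    (hQd0 : ∀ u v, T13.Adj u v → φ u = Q → LDir φ c u v = d0 → φ v = P) :
    ∀ v : Fin 13, (v = 0 ∨ v = 1 ∨ v = 2 ∨ v = 3) → φ v ≠ P ∧ φ v ≠ Q := by
  have deg4 : ∀ X n1 n2 n3 n4 : Fin 13, n1 ≠ n2 → n1 ≠ n3 → n1 ≠ n4 → n2 ≠ n3 →
      n2 ≠ n4 → n3 ≠ n4 → T13.Adj X n1 → T13.Adj X n2 → T13.Adj X n3 → T13.Adj X n4 →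
      φ X ≠ P ∧ φ X ≠ Q := by
    intro X n1 n2 n3 n4 h12 h13 h14 h23 h24 h34 a1 a2 a3 a4
    constructor
    · intro e
      exact four_dirs hpt hemb h12 h13 h14 h23 h24 h34 a1 a2 a3 a4 d0
        (hPd0 X n1 a1 e) (hPd0 X n2 a2 e) (hPd0 X n3 a3 e) (hPd0 X n4 a4 e)
    · intro e
      exact four_dirs hpt hemb h12 h13 h14 h23 h24 h34 a1 a2 a3 a4 d1
        (hQd1 X n1 a1 e) (hQd1 X n2 a2 e) (hQd1 X n3 a3 e) (hQd1 X n4 a4 e)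
  have hX1 : φ 1 ≠ P ∧ φ 1 ≠ Q :=
    deg4 1 0 4 5 6 (by decide) (by decide) (by decide) (by decide) (by decide)
      (by decide) (t13_adj (by decide)) (t13_adj (by decide)) (t13_adj (by decide))
      (t13_adj (by decide))
  have hX2 : φ 2 ≠ P ∧ φ 2 ≠ Q :=
    deg4 2 0 7 8 9 (by decide) (by decide) (by decide) (by decide) (by decide)
      (by decide) (t13_adj (by decide)) (t13_adj (by decide)) (t13_adj (by decide))
      (t13_adj (by decide))
  have hX3 : φ 3 ≠ P ∧ φ 3 ≠ Q :=
    deg4 3 0 10 11 12 (by decide) (by decide) (by decide) (by decide) (by decide)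
      (by decide) (t13_adj (by decide)) (t13_adj (by decide)) (t13_adj (by decide))
      (t13_adj (by decide))
  have a01 : T13.Adj 0 1 := t13_adj (by decide)
  have a02 : T13.Adj 0 2 := t13_adj (by decide)
  have a03 : T13.Adj 0 3 := t13_adj (by decide)
  have hY : φ 0 ≠ P ∧ φ 0 ≠ Q := by
    constructor
    · intro e
      by_cases g1 : LDir φ c 0 1 = d1
      · exact hX1.2 (hPd1 0 1 a01 e g1)
      by_cases g2 : LDir φ c 0 2 = d1
      · exact hX2.2 (hPd1 0 2 a02 e g2)
      by_cases g3 : LDir φ c 0 3 = d1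
      · exact hX3.2 (hPd1 0 3 a03 e g3)
      exact three_dirs hpt hemb (by decide) (by decide) (by decide) a01 a02 a03
        d0 d1 hd (hPd0 0 1 a01 e) (hPd0 0 2 a02 e) (hPd0 0 3 a03 e) g1 g2 g3
    · intro e
      by_cases g1 : LDir φ c 0 1 = d0
      · exact hX1.1 (hQd0 0 1 a01 e g1)
      by_cases g2 : LDir φ c 0 2 = d0
      · exact hX2.1 (hQd0 0 2 a02 e g2)
      by_cases g3 : LDir φ c 0 3 = d0
      · exact hX3.1 (hQd0 0 3 a03 e g3)
      exact three_dirs hpt hemb (by decide) (by decide) (by decide) a01 a02 a03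
        d1 d0 hd.symm (hQd1 0 1 a01 e) (hQd1 0 2 a02 e) (hQd1 0 3 a03 e) g1 g2 g3
  intro v hv
  rcases hv with rfl | rfl | rfl | rfl
  · exact hY
  · exact hX1
  · exact hX2
  · exact hX3

end Core

/-- In every L-shaped embedding of `T₁₃` in the `(2,2,2,1,2,2,2)`-staircase `S₁₃`,
none of the vertices `Y, X₁, X₂, X₃` (vertices `0, 1, 2, 3`) is mapped to a point of
the leftmost box `B₋₃` (box `0`) or of the rightmost box `B₃` (box `6`). -/
theorem T13_central_not_in_extreme_boxes (box : Fin 7 → Finset (ℝ × ℝ))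
    (hbox : IsStaircase ![2, 2, 2, 1, 2, 2, 2] box)
    (φ : Fin 13 → ℝ × ℝ) (c : Fin 13 → Fin 13 → ℝ × ℝ)
    (hemb : IsLEmbedding T13 (staircaseSet box) φ c) :
    ∀ v : Fin 13, (v = 0 ∨ v = 1 ∨ v = 2 ∨ v = 3) →
      φ v ∉ box 0 ∧ φ v ∉ box 6 := by
  obtain ⟨hcard, hwithin, hacross⟩ := hbox
  have hS : ∀ z : Fin 13, φ z ∈ staircaseSet box := hemb.2.1
  have hinj : Function.Injective φ := hemb.1
  -- the staircase is a point set
  have hpt : IsPointSet (staircaseSet box) := by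
    intro p hp q hq hne
    rw [staircaseSet, Finset.mem_biUnion] at hp hq
    obtain ⟨i, -, hp⟩ := hp
    obtain ⟨j, -, hq⟩ := hq
    rcases lt_trichotomy i j with h | h | h
    · have h2 := hacross i j h p hp q hq
      exact ⟨h2.1.ne, h2.2.ne'⟩
    · subst h
      have h2 := hwithin i p hp q hq hne
      refine ⟨h2.1, fun e => ?_⟩
      rcases lt_trichotomy p.1 q.1 with h3 | h3 | h3
      · exact absurd (h2.2.mp h3) (by rw [e]; exact lt_irrefl _)
      · exact h2.1 h3
      · have h4 := (hwithin i q hq p hp hne.symm).2.mp h3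
        rw [e] at h4
        exact lt_irrefl _ h4
    · have h2 := hacross j i h q hq p hp
      exact ⟨h2.1.ne', h2.2.ne⟩
  have hmem : ∀ z : Fin 13, ∃ j : Fin 7, φ z ∈ box j := by
    intro z
    have := hS z
    rw [staircaseSet, Finset.mem_biUnion] at this
    obtain ⟨j, -, hj⟩ := this
    exact ⟨j, hj⟩
  -- generic handler for box 0
  have key0 : ∀ P Q : ℝ × ℝ, box 0 = {P, Q} → P.1 < Q.1 →
      ∀ v : Fin 13, (v = 0 ∨ v = 1 ∨ v = 2 ∨ v = 3) → φ v ∉ box 0 := by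
    intro P Q hb hx
    have hPb : P ∈ box 0 := by rw [hb]; exact Finset.mem_insert_self _ _
    have hQb : Q ∈ box 0 := by
      rw [hb]; exact Finset.mem_insert_of_mem (Finset.mem_singleton_self _)
    have hPQ : P ≠ Q := fun e => absurd hx (by rw [e]; exact lt_irrefl _)
    have hy : P.2 < Q.2 := (hwithin 0 P hPb Q hQb hPQ).2.mp hx
    have hout : ∀ z : Fin 13, φ z ∉ box 0 → Q.1 < (φ z).1 ∧ (φ z).2 < P.2 := by
      intro z hz
      obtain ⟨j, hj⟩ := hmem z
      have hj0 : j ≠ 0 := fun e => hz (e ▸ hj)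
      have h0j : (0 : Fin 7) < j := Fin.pos_of_ne_zero hj0
      exact ⟨(hacross 0 j h0j Q hQb _ hj).1, (hacross 0 j h0j P hPb _ hj).2⟩
    have hcase : ∀ z : Fin 13, φ z = P ∨ φ z = Q ∨ (Q.1 < (φ z).1 ∧ (φ z).2 < P.2) := by
      intro z
      by_cases hz : φ z ∈ box 0
      · rw [hb, Finset.mem_insert, Finset.mem_singleton] at hz
        rcases hz with h | h
        · exact Or.inl h
        · exact Or.inr (Or.inl h)
      · exact Or.inr (Or.inr (hout z hz))
    have hPd0 : ∀ u w, T13.Adj u w → φ u = P → LDir φ c u w ≠ 0 := by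
      intro u w ha he h0
      have hl := LDir_zero hpt hemb ha h0
      rw [he] at hl
      rcases hcase w with h | h | h
      · exact ha.ne (hinj (he.trans h.symm))
      · rw [h] at hl; exact absurd hx (not_lt.mpr hl.le)
      · exact absurd hl (not_lt.mpr (hx.le.trans h.1.le))
    have hQd1 : ∀ u w, T13.Adj u w → φ u = Q → LDir φ c u w ≠ 3 := by
      intro u w ha he h0
      have hl := LDir_three hpt hemb ha h0
      rw [he] at hl
      rcases hcase w with h | h | h
      · rw [h] at hl; exact absurd hy (not_lt.mpr hl.le)
      · exact ha.ne (hinj (he.trans h.symm))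
      · exact absurd hl (not_lt.mpr (h.2.le.trans hy.le))
    have hPd1 : ∀ u w, T13.Adj u w → φ u = P → LDir φ c u w = 3 → φ w = Q := by
      intro u w ha he h0
      have hl := LDir_three hpt hemb ha h0
      rw [he] at hl
      rcases hcase w with h | h | h
      · exact absurd (ha.ne (hinj (he.trans h.symm))) (fun f => f)
      · exact h
      · exact absurd hl (not_lt.mpr h.2.le)
    have hQd0 : ∀ u w, T13.Adj u w → φ u = Q → LDir φ c u w = 0 → φ w = P := by
      intro u w ha he h0
      have hl := LDir_zero hpt hemb ha h0
      rw [he] at hl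
      rcases hcase w with h | h | h
      · exact h
      · exact absurd (ha.ne (hinj (he.trans h.symm))) (fun f => f)
      · exact absurd hl (not_lt.mpr h.1.le)
    intro v hv hvb
    have hne := T13_core hpt hemb P Q 0 3 (by decide) hPd0 hQd1 hPd1 hQd0 v hv
    rw [hb, Finset.mem_insert, Finset.mem_singleton] at hvb
    rcases hvb with h | h
    · exact hne.1 h
    · exact hne.2 h
  -- generic handler for box 6
  have key6 : ∀ P Q : ℝ × ℝ, box 6 = {P, Q} → P.1 < Q.1 →
      ∀ v : Fin 13, (v = 0 ∨ v = 1 ∨ v = 2 ∨ v = 3) → φ v ∉ box 6 := by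
    intro P Q hb hx
    have hPb : P ∈ box 6 := by rw [hb]; exact Finset.mem_insert_self _ _
    have hQb : Q ∈ box 6 := by
      rw [hb]; exact Finset.mem_insert_of_mem (Finset.mem_singleton_self _)
    have hPQ : P ≠ Q := fun e => absurd hx (by rw [e]; exact lt_irrefl _)
    have hy : P.2 < Q.2 := (hwithin 6 P hPb Q hQb hPQ).2.mp hx
    have hout : ∀ z : Fin 13, φ z ∉ box 6 → (φ z).1 < P.1 ∧ Q.2 < (φ z).2 := by
      intro z hz
      obtain ⟨j, hj⟩ := hmem z
      have hj6 : j ≠ 6 := fun e => hz (e ▸ hj)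
      have hj6' : j < 6 := lt_of_le_of_ne (Fin.le_last j) hj6
      exact ⟨(hacross j 6 hj6' _ hj P hPb).1, (hacross j 6 hj6' _ hj Q hQb).2⟩
    have hcase : ∀ z : Fin 13, φ z = P ∨ φ z = Q ∨ ((φ z).1 < P.1 ∧ Q.2 < (φ z).2) := by
      intro z
      by_cases hz : φ z ∈ box 6
      · rw [hb, Finset.mem_insert, Finset.mem_singleton] at hz
        rcases hz with h | h
        · exact Or.inl h
        · exact Or.inr (Or.inl h)
      · exact Or.inr (Or.inr (hout z hz))
    -- forbidden at P (the lowest point): direction 2 (down)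
    have hPd0 : ∀ u w, T13.Adj u w → φ u = P → LDir φ c u w ≠ 2 := by
      intro u w ha he h0
      have hl := LDir_two hpt hemb ha h0
      rw [he] at hl
      rcases hcase w with h | h | h
      · exact ha.ne (hinj (he.trans h.symm))
      · rw [h] at hl; exact absurd hy (not_lt.mpr hl.le)
      · exact absurd hl (not_lt.mpr (hy.le.trans h.2.le))
    -- forbidden at Q (the rightmost point): direction 1 (right)
    have hQd1 : ∀ u w, T13.Adj u w → φ u = Q → LDir φ c u w ≠ 1 := by
      intro u w ha he h0
      have hl := LDir_one hpt hemb ha h0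
      rw [he] at hl
      rcases hcase w with h | h | h
      · rw [h] at hl; exact absurd hx (not_lt.mpr hl.le)
      · exact ha.ne (hinj (he.trans h.symm))
      · exact absurd hl (not_lt.mpr (h.1.le.trans hx.le))
    have hPd1 : ∀ u w, T13.Adj u w → φ u = P → LDir φ c u w = 1 → φ w = Q := by
      intro u w ha he h0
      have hl := LDir_one hpt hemb ha h0
      rw [he] at hl
      rcases hcase w with h | h | h
      · exact absurd (ha.ne (hinj (he.trans h.symm))) (fun f => f)
      · exact h
      · exact absurd hl (not_lt.mpr h.1.le)
    have hQd0 : ∀ u w, T13.Adj u w → φ u = Q → LDir φ c u w = 2 → φ w = P := by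
      intro u w ha he h0
      have hl := LDir_two hpt hemb ha h0
      rw [he] at hl
      rcases hcase w with h | h | h
      · exact h
      · exact absurd (ha.ne (hinj (he.trans h.symm))) (fun f => f)
      · exact absurd hl (not_lt.mpr h.2.le)
    intro v hv hvb
    have hne := T13_core hpt hemb P Q 2 1 (by decide) hPd0 hQd1 hPd1 hQd0 v hv
    rw [hb, Finset.mem_insert, Finset.mem_singleton] at hvb
    rcases hvb with h | h
    · exact hne.1 h
    · exact hne.2 h
  -- extract the two points of each extreme box
  have hc0 : (box 0).card = 2 := by simpa using hcard 0
  have hc6 : (box 6).card = 2 := by simpa using hcard 6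
  obtain ⟨P0, Q0, hne0, hb0⟩ := Finset.card_eq_two.mp hc0
  obtain ⟨P6, Q6, hne6, hb6⟩ := Finset.card_eq_two.mp hc6
  have hP0b : P0 ∈ box 0 := by rw [hb0]; exact Finset.mem_insert_self _ _
  have hQ0b : Q0 ∈ box 0 := by
    rw [hb0]; exact Finset.mem_insert_of_mem (Finset.mem_singleton_self _)
  have hP6b : P6 ∈ box 6 := by rw [hb6]; exact Finset.mem_insert_self _ _
  have hQ6b : Q6 ∈ box 6 := by
    rw [hb6]; exact Finset.mem_insert_of_mem (Finset.mem_singleton_self _)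
  have hx0 : P0.1 ≠ Q0.1 := (hwithin 0 P0 hP0b Q0 hQ0b hne0).1
  have hx6 : P6.1 ≠ Q6.1 := (hwithin 6 P6 hP6b Q6 hQ6b hne6).1
  intro v hv
  constructor
  · rcases lt_or_gt_of_ne hx0 with h | h
    · exact key0 P0 Q0 hb0 h v hv
    · exact key0 Q0 P0 (by rw [hb0, Finset.pair_comm]) h v hv
  · rcases lt_or_gt_of_ne hx6 with h | h
    · exact key6 P6 Q6 hb6 h v hv
    · exact key6 Q6 P6 (by rw [hb6, Finset.pair_comm]) h v hv
end

section
/- In every L-shaped embedding of the tree T₁₃ in the point set S₁₃, the three degree-4 vertices X₁, X₂, X₃ are mapped into three pairwise distinct boxes of S₁₃. -/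
/-! ### Auxiliary material for the proof -/

instance : DecidableRel T13.Adj := fun a b =>
  decidable_of_iff (a ≠ b ∧ (T13Par a.val = b.val ∨ T13Par b.val = a.val)) Iff.rfl

/-- Neighbor list of a degree-4 vertex `x ∈ {1,2,3}` of `T13`. -/
def nbrs : Fin 13 → Fin 4 → Fin 13 := fun x => ![0, 3*x+1, 3*x+2, 3*x+3]

lemma nbrs_adj : ∀ x : Fin 13, (x = 1 ∨ x = 2 ∨ x = 3) → ∀ j, T13.Adj x (nbrs x j) := by decide

lemma nbrs_inj : ∀ x : Fin 13, (x = 1 ∨ x = 2 ∨ x = 3) → Function.Injective (nbrs x) := by decide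

lemma nbrs_ne : ∀ x y : Fin 13, (x = 1 ∨ x = 2 ∨ x = 3) → (y = 1 ∨ y = 2 ∨ y = 3) →
    x ≠ y → ∀ j, nbrs x j ≠ y := by decide

lemma mem_horiz {x1 x2 x y : ℝ} (h1 : x1 ≤ x) (h2 : x ≤ x2) :
    ((x, y) : ℝ × ℝ) ∈ segment ℝ (x1, y) (x2, y) := by
  obtain ⟨a, b, ha, hb, hab, hx⟩ :=
    (segment_eq_Icc (h1.trans h2) ▸ Set.mem_Icc.mpr ⟨h1, h2⟩ : x ∈ segment ℝ x1 x2)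
  refine ⟨a, b, ha, hb, hab, ?_⟩
  have h : a • ((x1, y) : ℝ × ℝ) + b • ((x2, y) : ℝ × ℝ) = (a*x1 + b*x2, a*y + b*y) := rfl
  rw [h, Prod.ext_iff]
  exact ⟨by simpa [smul_eq_mul] using hx, by linear_combination y * hab⟩

lemma mem_vert {y1 y2 x y : ℝ} (h1 : y1 ≤ y) (h2 : y ≤ y2) :
    ((x, y) : ℝ × ℝ) ∈ segment ℝ (x, y1) (x, y2) := by
  obtain ⟨a, b, ha, hb, hab, hx⟩ :=
    (segment_eq_Icc (h1.trans h2) ▸ Set.mem_Icc.mpr ⟨h1, h2⟩ : y ∈ segment ℝ y1 y2)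
  refine ⟨a, b, ha, hb, hab, ?_⟩
  have h : a • ((x, y1) : ℝ × ℝ) + b • ((x, y2) : ℝ × ℝ) = (a*x + b*x, a*y1 + b*y2) := rfl
  rw [h, Prod.ext_iff]
  exact ⟨by linear_combination x * hab, by simpa [smul_eq_mul] using hx⟩

/-- The direction in which the edge from `w` to `r` leaves `w`:
`0` = right, `1` = left, `2` = up, `3` = down. -/
noncomputable def dirOf (φ : Fin 13 → ℝ × ℝ) (c : Fin 13 → Fin 13 → ℝ × ℝ)
    (w r : Fin 13) : Fin 4 :=
  if c w r = ((φ r).1, (φ w).2) then (if (φ w).1 < (φ r).1 then 0 else 1)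
  else (if (φ w).2 < (φ r).2 then 2 else 3)

section Aux
variable {S : Finset (ℝ × ℝ)} {φ : Fin 13 → ℝ × ℝ} {c : Fin 13 → Fin 13 → ℝ × ℝ}

lemma dir_spec0 {w r : Fin 13} (h : dirOf φ c w r = 0) :
    c w r = ((φ r).1, (φ w).2) ∧ (φ w).1 < (φ r).1 := by
  unfold dirOf at h
  split_ifs at h with h1 h2 h3
  · exact ⟨h1, h2⟩
  · exact absurd h (by decide)
  · exact absurd h (by decide)
  · exact absurd h (by decide)

lemma dir_spec1 {w r : Fin 13} (hxne : (φ r).1 ≠ (φ w).1) (h : dirOf φ c w r = 1) :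
    c w r = ((φ r).1, (φ w).2) ∧ (φ r).1 < (φ w).1 := by
  unfold dirOf at h
  split_ifs at h with h1 h2 h3
  · exact absurd h (by decide)
  · exact ⟨h1, lt_of_le_of_ne (not_lt.mp h2) hxne⟩
  · exact absurd h (by decide)
  · exact absurd h (by decide)

lemma dir_spec2 {w r : Fin 13}
    (hcor : c w r = ((φ w).1, (φ r).2) ∨ c w r = ((φ r).1, (φ w).2))
    (h : dirOf φ c w r = 2) :
    c w r = ((φ w).1, (φ r).2) ∧ (φ w).2 < (φ r).2 := by
  unfold dirOf at h
  split_ifs at h with h1 h2 h3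
  · exact absurd h (by decide)
  · exact absurd h (by decide)
  · exact ⟨hcor.resolve_right h1, h3⟩
  · exact absurd h (by decide)

lemma dir_spec3 {w r : Fin 13}
    (hcor : c w r = ((φ w).1, (φ r).2) ∨ c w r = ((φ r).1, (φ w).2))
    (hyne : (φ r).2 ≠ (φ w).2) (h : dirOf φ c w r = 3) :
    c w r = ((φ w).1, (φ r).2) ∧ (φ r).2 < (φ w).2 := by
  unfold dirOf at h
  split_ifs at h with h1 h2 h3
  · exact absurd h (by decide)
  · exact absurd h (by decide)
  · exact absurd h (by decide)
  · exact ⟨hcor.resolve_right h1, lt_of_le_of_ne (not_lt.mp h3) hyne⟩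

lemma sym2_ne {w r1 r2 : Fin 13} (h : r1 ≠ r2) (h1 : r1 ≠ w) : s(w, r1) ≠ s(w, r2) := by
  intro heq
  rcases Sym2.eq_iff.mp heq with ⟨-, h2⟩ | ⟨-, h3⟩
  exacts [h h2, h1 h3]

lemma no_cross (hemb : IsLEmbedding T13 S φ c) {u v a b : Fin 13}
    (h1 : T13.Adj u v) (h2 : T13.Adj a b) (hs : s(u, v) ≠ s(a, b))
    {z : ℝ × ℝ} (hz1 : z ∈ LDraw φ c u v) (hz2 : z ∈ LDraw φ c a b)
    (hu : z ≠ φ u) (hv : z ≠ φ v) (ha : z ≠ φ a) (hb : z ≠ φ b) : False := by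
  obtain ⟨w, hw1, hw2, hw3⟩ := hemb.2.2.2.2 u v a b h1 h2 hs z ⟨hz1, hz2⟩
  rcases hw1 with rfl | rfl
  exacts [hu hw3, hv hw3]

lemma overlap_h (hemb : IsLEmbedding T13 S φ c) {w r1 r2 : Fin 13}
    (h1 : T13.Adj w r1) (h2 : T13.Adj w r2) (hne : r1 ≠ r2)
    (hc1 : c w r1 = ((φ r1).1, (φ w).2)) (hc2 : c w r2 = ((φ r2).1, (φ w).2))
    (hy1 : (φ r1).2 ≠ (φ w).2) (hy2 : (φ r2).2 ≠ (φ w).2)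
    (hx1 : (φ r1).1 ≠ (φ w).1)
    (hord : ((φ w).1 ≤ (φ r1).1 ∧ (φ r1).1 ≤ (φ r2).1) ∨
            ((φ r2).1 ≤ (φ r1).1 ∧ (φ r1).1 ≤ (φ w).1)) : False := by
  have hz1 : (((φ r1).1, (φ w).2) : ℝ × ℝ) ∈ LDraw φ c w r1 :=
    Set.mem_union_left _ (by rw [hc1]; exact right_mem_segment ℝ _ _)
  have hz2 : (((φ r1).1, (φ w).2) : ℝ × ℝ) ∈ LDraw φ c w r2 := by
    refine Set.mem_union_left _ ?_
    rw [hc2]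
    rcases hord with ⟨ha, hb⟩ | ⟨ha, hb⟩
    · exact mem_horiz ha hb
    · rw [segment_symm]; exact mem_horiz ha hb
  exact no_cross hemb h1 h2 (sym2_ne hne h1.ne') hz1 hz2
    (fun h => hx1 ((Prod.ext_iff.mp h).1))
    (fun h => hy1 ((Prod.ext_iff.mp h).2).symm)
    (fun h => hx1 ((Prod.ext_iff.mp h).1))
    (fun h => hy2 ((Prod.ext_iff.mp h).2).symm)

lemma overlap_v (hemb : IsLEmbedding T13 S φ c) {w r1 r2 : Fin 13}
    (h1 : T13.Adj w r1) (h2 : T13.Adj w r2) (hne : r1 ≠ r2)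
    (hc1 : c w r1 = ((φ w).1, (φ r1).2)) (hc2 : c w r2 = ((φ w).1, (φ r2).2))
    (hx1 : (φ r1).1 ≠ (φ w).1) (hx2 : (φ r2).1 ≠ (φ w).1)
    (hy1 : (φ r1).2 ≠ (φ w).2)
    (hord : ((φ w).2 ≤ (φ r1).2 ∧ (φ r1).2 ≤ (φ r2).2) ∨
            ((φ r2).2 ≤ (φ r1).2 ∧ (φ r1).2 ≤ (φ w).2)) : False := by
  have hz1 : (((φ w).1, (φ r1).2) : ℝ × ℝ) ∈ LDraw φ c w r1 :=
    Set.mem_union_left _ (by rw [hc1]; exact right_mem_segment ℝ _ _)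
  have hz2 : (((φ w).1, (φ r1).2) : ℝ × ℝ) ∈ LDraw φ c w r2 := by
    refine Set.mem_union_left _ ?_
    rw [hc2]
    rcases hord with ⟨ha, hb⟩ | ⟨ha, hb⟩
    · exact mem_vert ha hb
    · rw [segment_symm]; exact mem_vert ha hb
  exact no_cross hemb h1 h2 (sym2_ne hne h1.ne') hz1 hz2
    (fun h => hy1 ((Prod.ext_iff.mp h).2))
    (fun h => hx1 ((Prod.ext_iff.mp h).1).symm)
    (fun h => hy1 ((Prod.ext_iff.mp h).2))
    (fun h => hx2 ((Prod.ext_iff.mp h).1).symm)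

/-- From a degree-4 vertex whose 4 neighbors all lie strictly upper-left or
strictly lower-right of it, edges leave in all 4 directions. -/
lemma base_dirs (hemb : IsLEmbedding T13 S φ c) (w0 : Fin 13) (n : Fin 4 → Fin 13)
    (hadj : ∀ j, T13.Adj w0 (n j)) (hninj : Function.Injective n)
    (hside : ∀ j, ((φ (n j)).1 < (φ w0).1 ∧ (φ w0).2 < (φ (n j)).2) ∨
                  ((φ w0).1 < (φ (n j)).1 ∧ (φ (n j)).2 < (φ w0).2)) :
    ∀ d : Fin 4, ∃ j, dirOf φ c w0 (n j) = d := by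
  have hcor : ∀ j, c w0 (n j) = ((φ w0).1, (φ (n j)).2) ∨
      c w0 (n j) = ((φ (n j)).1, (φ w0).2) := fun j => hemb.2.2.2.1 w0 (n j) (hadj j)
  have hxne : ∀ j, (φ (n j)).1 ≠ (φ w0).1 := by
    intro j; rcases hside j with ⟨h1, -⟩ | ⟨h1, -⟩; exacts [ne_of_lt h1, ne_of_gt h1]
  have hyne : ∀ j, (φ (n j)).2 ≠ (φ w0).2 := by
    intro j; rcases hside j with ⟨-, h1⟩ | ⟨-, h1⟩; exacts [ne_of_gt h1, ne_of_lt h1]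
  have hinjd : ∀ j k, dirOf φ c w0 (n j) = dirOf φ c w0 (n k) → j = k := by
    intro j k h
    by_contra hjk
    have hn : n j ≠ n k := fun e => hjk (hninj e)
    have h4 : ∀ d : Fin 4, d = 0 ∨ d = 1 ∨ d = 2 ∨ d = 3 := by decide
    rcases h4 (dirOf φ c w0 (n j)) with hd | hd | hd | hd
    · obtain ⟨hc1, hl1⟩ := dir_spec0 hd
      obtain ⟨hc2, hl2⟩ := dir_spec0 (h.symm.trans hd)
      rcases le_total ((φ (n j)).1) ((φ (n k)).1) with hle | hle
      · exact overlap_h hemb (hadj j) (hadj k) hn hc1 hc2 (hyne j) (hyne k) (hxne j)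
          (Or.inl ⟨hl1.le, hle⟩)
      · exact overlap_h hemb (hadj k) (hadj j) hn.symm hc2 hc1 (hyne k) (hyne j) (hxne k)
          (Or.inl ⟨hl2.le, hle⟩)
    · obtain ⟨hc1, hl1⟩ := dir_spec1 (hxne j) hd
      obtain ⟨hc2, hl2⟩ := dir_spec1 (hxne k) (h.symm.trans hd)
      rcases le_total ((φ (n j)).1) ((φ (n k)).1) with hle | hle
      · exact overlap_h hemb (hadj k) (hadj j) hn.symm hc2 hc1 (hyne k) (hyne j) (hxne k)
          (Or.inr ⟨hle, hl2.le⟩)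
      · exact overlap_h hemb (hadj j) (hadj k) hn hc1 hc2 (hyne j) (hyne k) (hxne j)
          (Or.inr ⟨hle, hl1.le⟩)
    · obtain ⟨hc1, hl1⟩ := dir_spec2 (hcor j) hd
      obtain ⟨hc2, hl2⟩ := dir_spec2 (hcor k) (h.symm.trans hd)
      rcases le_total ((φ (n j)).2) ((φ (n k)).2) with hle | hle
      · exact overlap_v hemb (hadj j) (hadj k) hn hc1 hc2 (hxne j) (hxne k) (hyne j)
          (Or.inl ⟨hl1.le, hle⟩)
      · exact overlap_v hemb (hadj k) (hadj j) hn.symm hc2 hc1 (hxne k) (hxne j) (hyne k)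
          (Or.inl ⟨hl2.le, hle⟩)
    · obtain ⟨hc1, hl1⟩ := dir_spec3 (hcor j) (hyne j) hd
      obtain ⟨hc2, hl2⟩ := dir_spec3 (hcor k) (hyne k) (h.symm.trans hd)
      rcases le_total ((φ (n j)).2) ((φ (n k)).2) with hle | hle
      · exact overlap_v hemb (hadj k) (hadj j) hn.symm hc2 hc1 (hxne k) (hxne j) (hyne k)
          (Or.inr ⟨hle, hl2.le⟩)
      · exact overlap_v hemb (hadj j) (hadj k) hn hc1 hc2 (hxne j) (hxne k) (hyne j)
          (Or.inr ⟨hle, hl1.le⟩)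
  have hsurj : Function.Surjective (fun j => dirOf φ c w0 (n j)) :=
    Finite.injective_iff_surjective.mp (fun j k h => hinjd j k h)
  exact fun d => hsurj d

/-- Main work lemma: two nonadjacent degree-4 vertices of `T13` cannot be mapped
into the same box, assuming the given orientation. -/
lemma key (box : Fin 7 → Finset (ℝ × ℝ)) (hbox : IsStaircase ![2, 2, 2, 1, 2, 2, 2] box)
    (φ : Fin 13 → ℝ × ℝ) (c : Fin 13 → Fin 13 → ℝ × ℝ)
    (hemb : IsLEmbedding T13 (staircaseSet box) φ c)
    (u v : Fin 13) (nu nv : Fin 4 → Fin 13)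
    (hadju : ∀ j, T13.Adj u (nu j)) (hadjv : ∀ j, T13.Adj v (nv j))
    (hinju : Function.Injective nu) (hinjv : Function.Injective nv)
    (hnuv : ∀ j, nu j ≠ v) (hnvu : ∀ j, nv j ≠ u)
    (huv : u ≠ v)
    (i : Fin 7) (hu : φ u ∈ box i) (hv : φ v ∈ box i)
    (hx : (φ u).1 < (φ v).1) : False := by
  have hne : φ u ≠ φ v := fun h => huv (hemb.1 h)
  have hy : (φ u).2 < (φ v).2 := ((hbox.2.1 i _ hu _ hv hne).2).mp hx
  have hle2 : ∀ t : Fin 7, (![2, 2, 2, 1, 2, 2, 2] : Fin 7 → ℕ) t ≤ 2 := by decide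
  have hcard2 : ({φ u, φ v} : Finset (ℝ × ℝ)).card = 2 := Finset.card_pair hne
  have hbeq : ({φ u, φ v} : Finset (ℝ × ℝ)) = box i := by
    refine Finset.eq_of_subset_of_card_le ?_ ?_
    · intro x hx'
      rcases Finset.mem_insert.mp hx' with rfl | hx'
      · exact hu
      · rcases Finset.mem_singleton.mp hx' with rfl
        exact hv
    · rw [hbox.1 i, hcard2]; exact hle2 i
  have hB : ∀ r : Fin 13, r ≠ u → r ≠ v →
      ((φ r).1 < (φ u).1 ∧ (φ v).2 < (φ r).2) ∨
      ((φ v).1 < (φ r).1 ∧ (φ r).2 < (φ u).2) := by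
    intro r hru hrv
    have hr := hemb.2.1 r
    rw [staircaseSet, Finset.mem_biUnion] at hr
    obtain ⟨j, -, hj⟩ := hr
    rcases lt_trichotomy j i with hji | hji | hji
    · exact Or.inl ⟨(hbox.2.2 j i hji _ hj _ hu).1, (hbox.2.2 j i hji _ hj _ hv).2⟩
    · exfalso
      subst hji
      have : φ r ∈ ({φ u, φ v} : Finset (ℝ × ℝ)) := hbeq ▸ hj
      rcases Finset.mem_insert.mp this with h | h
      · exact hru (hemb.1 h)
      · exact hrv (hemb.1 (Finset.mem_singleton.mp h))
    · exact Or.inr ⟨(hbox.2.2 i j hji _ hv _ hj).1, (hbox.2.2 i j hji _ hu _ hj).2⟩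
  have hsideu : ∀ j, ((φ (nu j)).1 < (φ u).1 ∧ (φ u).2 < (φ (nu j)).2) ∨
      ((φ u).1 < (φ (nu j)).1 ∧ (φ (nu j)).2 < (φ u).2) := by
    intro j
    rcases hB (nu j) (hadju j).ne' (hnuv j) with ⟨h1, h2⟩ | ⟨h1, h2⟩
    · exact Or.inl ⟨h1, by linarith⟩
    · exact Or.inr ⟨by linarith, h2⟩
  have hsidev : ∀ j, ((φ (nv j)).1 < (φ v).1 ∧ (φ v).2 < (φ (nv j)).2) ∨
      ((φ v).1 < (φ (nv j)).1 ∧ (φ (nv j)).2 < (φ v).2) := by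
    intro j
    rcases hB (nv j) (hnvu j) (hadjv j).ne' with ⟨h1, h2⟩ | ⟨h1, h2⟩
    · exact Or.inl ⟨by linarith, h2⟩
    · exact Or.inr ⟨h1, by linarith⟩
  obtain ⟨jR, hjR⟩ := base_dirs hemb u nu hadju hinju hsideu 0
  obtain ⟨jD, hjD⟩ := base_dirs hemb v nv hadjv hinjv hsidev 3
  obtain ⟨hcR, hltR⟩ := dir_spec0 hjR
  have hyneD : (φ (nv jD)).2 ≠ (φ v).2 := by
    rcases hsidev jD with ⟨-, h1⟩ | ⟨-, h1⟩; exacts [ne_of_gt h1, ne_of_lt h1]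
  obtain ⟨hcD, hltD⟩ := dir_spec3 (hemb.2.2.2.1 v (nv jD) (hadjv jD)) hyneD hjD
  -- positions of the two neighbors involved
  have hBR := hB (nu jR) (hadju jR).ne' (hnuv jR)
  have hR : (φ v).1 < (φ (nu jR)).1 ∧ (φ (nu jR)).2 < (φ u).2 := by
    rcases hBR with ⟨h1, -⟩ | h
    · exact absurd hltR (by linarith)
    · exact h
  have hBD := hB (nv jD) (hnvu jD) (hadjv jD).ne'
  have hD : (φ v).1 < (φ (nv jD)).1 ∧ (φ (nv jD)).2 < (φ u).2 := by
    rcases hBD with ⟨-, h2⟩ | h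
    · exact absurd hltD (by linarith)
    · exact h
  -- the crossing point
  have hz1 : (((φ v).1, (φ u).2) : ℝ × ℝ) ∈ LDraw φ c u (nu jR) := by
    refine Set.mem_union_left _ ?_
    rw [hcR]
    exact mem_horiz hx.le hR.1.le
  have hz2 : (((φ v).1, (φ u).2) : ℝ × ℝ) ∈ LDraw φ c v (nv jD) := by
    refine Set.mem_union_left _ ?_
    rw [hcD, segment_symm]
    exact mem_vert hD.2.le hy.le
  have hsne : s(u, nu jR) ≠ s(v, nv jD) := by
    intro heq
    rcases Sym2.eq_iff.mp heq with ⟨h1, -⟩ | ⟨h1, -⟩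
    exacts [huv h1, hnvu jD h1.symm]
  exact no_cross hemb (hadju jR) (hadjv jD) hsne hz1 hz2
    (fun h => ne_of_gt hx ((Prod.ext_iff.mp h).1))
    (fun h => ne_of_lt hR.1 ((Prod.ext_iff.mp h).1))
    (fun h => ne_of_lt hy ((Prod.ext_iff.mp h).2))
    (fun h => ne_of_gt hD.2 ((Prod.ext_iff.mp h).2))

end Aux

/-- In every L-shaped embedding of `T₁₃` in the `(2,2,2,1,2,2,2)`-staircase `S₁₃`,
the three degree-4 vertices `X₁, X₂, X₃` (vertices `1, 2, 3`) are mapped into three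
pairwise distinct boxes. -/
theorem T13_degree_four_distinct_boxes (box : Fin 7 → Finset (ℝ × ℝ))
    (hbox : IsStaircase ![2, 2, 2, 1, 2, 2, 2] box)
    (φ : Fin 13 → ℝ × ℝ) (c : Fin 13 → Fin 13 → ℝ × ℝ)
    (hemb : IsLEmbedding T13 (staircaseSet box) φ c) :
    ∀ u v : Fin 13, (u = 1 ∨ u = 2 ∨ u = 3) → (v = 1 ∨ v = 2 ∨ v = 3) → u ≠ v →
      ∀ i : Fin 7, ¬ (φ u ∈ box i ∧ φ v ∈ box i) := by
  intro u v hu hv huv i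
  rintro ⟨hbu, hbv⟩
  have hne : φ u ≠ φ v := fun h => huv (hemb.1 h)
  have hx := (hbox.2.1 i _ hbu _ hbv hne).1
  rcases hx.lt_or_gt with h | h
  · exact key box hbox φ c hemb u v (nbrs u) (nbrs v) (nbrs_adj u hu) (nbrs_adj v hv)
      (nbrs_inj u hu) (nbrs_inj v hv) (nbrs_ne u v hu hv huv) (nbrs_ne v u hv hu huv.symm)
      huv i hbu hbv h
  · exact key box hbox φ c hemb v u (nbrs v) (nbrs u) (nbrs_adj v hv) (nbrs_adj u hu)
      (nbrs_inj v hv) (nbrs_inj u hu) (nbrs_ne v u hv hu huv.symm) (nbrs_ne u v hu hv huv)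
      huv.symm i hbv hbu h
end

section
/- In every L-shaped embedding of the tree T₁₃ in the point set S₁₃, the vertex Y is mapped to a point of one of the three middle boxes B₋₁, B₀, or B₁ of S₁₃. -/

lemma seg_vert {x y1 y2 t : ℝ} (h1 : y1 ≤ t) (h2 : t ≤ y2) :
    ((x, t) : ℝ × ℝ) ∈ segment ℝ (x, y1) (x, y2) := by
  rcases eq_or_lt_of_le (h1.trans h2) with h | h
  · have ht : t = y1 := le_antisymm (h ▸ h2) h1
    subst ht
    exact left_mem_segment ℝ _ _
  · have hne : y2 - y1 ≠ 0 := sub_ne_zero.2 h.ne'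
    refine ⟨(y2 - t)/(y2 - y1), (t - y1)/(y2 - y1),
      div_nonneg (by linarith) (by linarith), div_nonneg (by linarith) (by linarith), ?_, ?_⟩
    · field_simp; ring
    · simp only [Prod.smul_mk, Prod.mk_add_mk, smul_eq_mul, Prod.mk.injEq]
      constructor
      · field_simp; ring
      · field_simp; ring

lemma seg_horiz {y x1 x2 t : ℝ} (h1 : x1 ≤ t) (h2 : t ≤ x2) :
    ((t, y) : ℝ × ℝ) ∈ segment ℝ (x1, y) (x2, y) := by
  rcases eq_or_lt_of_le (h1.trans h2) with h | h
  · have ht : t = x1 := le_antisymm (h ▸ h2) h1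
    subst ht
    exact left_mem_segment ℝ _ _
  · have hne : x2 - x1 ≠ 0 := sub_ne_zero.2 h.ne'
    refine ⟨(x2 - t)/(x2 - x1), (t - x1)/(x2 - x1),
      div_nonneg (by linarith) (by linarith), div_nonneg (by linarith) (by linarith), ?_, ?_⟩
    · field_simp; ring
    · simp only [Prod.smul_mk, Prod.mk_add_mk, smul_eq_mul, Prod.mk.injEq]
      constructor
      · field_simp; ring
      · field_simp; ring

lemma neg_seg {p A B : ℝ × ℝ} (h : p ∈ segment ℝ (-A) (-B)) : -p ∈ segment ℝ A B := by
  obtain ⟨s, t, hs, ht, hst, heq⟩ := h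
  exact ⟨s, t, hs, ht, hst, by rw [← heq]; simp [smul_neg]; abel⟩

section Clash
variable {φ : Fin 13 → ℝ × ℝ} {c : Fin 13 → Fin 13 → ℝ × ℝ} {S : Finset (ℝ × ℝ)}

lemma clashV (hemb : IsLEmbedding T13 S φ c) {u v w : Fin 13}
    (huv : T13.Adj u v) (huw : T13.Adj u w) (hvw : v ≠ w)
    (hcv : c u v = ((φ u).1, (φ v).2)) (hcw : c u w = ((φ u).1, (φ w).2))
    (hside : ((φ u).2 < (φ v).2 ∧ (φ u).2 < (φ w).2) ∨
             ((φ v).2 < (φ u).2 ∧ (φ w).2 < (φ u).2)) : False := by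
  obtain ⟨hinj, hS, hsym, hcor, hcross⟩ := hemb
  have hsne : s(u, v) ≠ s(u, w) := by
    intro h
    rcases Sym2.eq_iff.mp h with ⟨-, h2⟩ | ⟨h2, h3⟩
    · exact hvw h2
    · exact huv.ne' h3
  rcases hside with ⟨h1, h2⟩ | ⟨h1, h2⟩
  · set t := ((φ u).2 + min (φ v).2 (φ w).2) / 2 with ht
    have hmin : (φ u).2 < min (φ v).2 (φ w).2 := lt_min h1 h2
    have hm1 : min (φ v).2 (φ w).2 ≤ (φ v).2 := min_le_left _ _
    have hm2 : min (φ v).2 (φ w).2 ≤ (φ w).2 := min_le_right _ _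
    have hlt1 : (φ u).2 < t := by rw [ht]; linarith
    have hlt2 : t ≤ (φ v).2 := by rw [ht]; linarith
    have hlt3 : t ≤ (φ w).2 := by rw [ht]; linarith
    have hp1 : ((φ u).1, t) ∈ segment ℝ (φ u) (c u v) := by
      have h := seg_vert (x := (φ u).1) hlt1.le hlt2
      rw [Prod.mk.eta] at h
      rw [hcv]; exact h
    have hp2 : ((φ u).1, t) ∈ segment ℝ (φ u) (c u w) := by
      have h := seg_vert (x := (φ u).1) hlt1.le hlt3
      rw [Prod.mk.eta] at h
      rw [hcw]; exact h
    obtain ⟨z, hz1, hz2, hz3⟩ := hcross u v u w huv huw hsne _ ⟨Or.inl hp1, Or.inl hp2⟩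
    rcases hz1 with rfl | rfl
    · exact hlt1.ne' (congrArg Prod.snd hz3)
    · rcases hz2 with h | h
      · exact huv.ne' h
      · exact hvw h
  · set t := ((φ u).2 + max (φ v).2 (φ w).2) / 2 with ht
    have hmax : max (φ v).2 (φ w).2 < (φ u).2 := max_lt h1 h2
    have hm1 : (φ v).2 ≤ max (φ v).2 (φ w).2 := le_max_left _ _
    have hm2 : (φ w).2 ≤ max (φ v).2 (φ w).2 := le_max_right _ _
    have hlt1 : t < (φ u).2 := by rw [ht]; linarith
    have hlt2 : (φ v).2 ≤ t := by rw [ht]; linarith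
    have hlt3 : (φ w).2 ≤ t := by rw [ht]; linarith
    have hp1 : ((φ u).1, t) ∈ segment ℝ (φ u) (c u v) := by
      have h := seg_vert (x := (φ u).1) hlt2 hlt1.le
      rw [segment_symm, Prod.mk.eta] at h
      rw [hcv]; exact h
    have hp2 : ((φ u).1, t) ∈ segment ℝ (φ u) (c u w) := by
      have h := seg_vert (x := (φ u).1) hlt3 hlt1.le
      rw [segment_symm, Prod.mk.eta] at h
      rw [hcw]; exact h
    obtain ⟨z, hz1, hz2, hz3⟩ := hcross u v u w huv huw hsne _ ⟨Or.inl hp1, Or.inl hp2⟩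
    rcases hz1 with rfl | rfl
    · exact hlt1.ne (congrArg Prod.snd hz3)
    · rcases hz2 with h | h
      · exact huv.ne' h
      · exact hvw h

lemma clashH (hemb : IsLEmbedding T13 S φ c) {u v w : Fin 13}
    (huv : T13.Adj u v) (huw : T13.Adj u w) (hvw : v ≠ w)
    (hcv : c u v = ((φ v).1, (φ u).2)) (hcw : c u w = ((φ w).1, (φ u).2))
    (hside : ((φ u).1 < (φ v).1 ∧ (φ u).1 < (φ w).1) ∨
             ((φ v).1 < (φ u).1 ∧ (φ w).1 < (φ u).1)) : False := by
  obtain ⟨hinj, hS, hsym, hcor, hcross⟩ := hemb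
  have hsne : s(u, v) ≠ s(u, w) := by
    intro h
    rcases Sym2.eq_iff.mp h with ⟨-, h2⟩ | ⟨h2, h3⟩
    · exact hvw h2
    · exact huv.ne' h3
  rcases hside with ⟨h1, h2⟩ | ⟨h1, h2⟩
  · set t := ((φ u).1 + min (φ v).1 (φ w).1) / 2 with ht
    have hmin : (φ u).1 < min (φ v).1 (φ w).1 := lt_min h1 h2
    have hm1 : min (φ v).1 (φ w).1 ≤ (φ v).1 := min_le_left _ _
    have hm2 : min (φ v).1 (φ w).1 ≤ (φ w).1 := min_le_right _ _
    have hlt1 : (φ u).1 < t := by rw [ht]; linarith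
    have hlt2 : t ≤ (φ v).1 := by rw [ht]; linarith
    have hlt3 : t ≤ (φ w).1 := by rw [ht]; linarith
    have hp1 : (t, (φ u).2) ∈ segment ℝ (φ u) (c u v) := by
      have h := seg_horiz (y := (φ u).2) hlt1.le hlt2
      rw [Prod.mk.eta] at h
      rw [hcv]; exact h
    have hp2 : (t, (φ u).2) ∈ segment ℝ (φ u) (c u w) := by
      have h := seg_horiz (y := (φ u).2) hlt1.le hlt3
      rw [Prod.mk.eta] at h
      rw [hcw]; exact h
    obtain ⟨z, hz1, hz2, hz3⟩ := hcross u v u w huv huw hsne _ ⟨Or.inl hp1, Or.inl hp2⟩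
    rcases hz1 with rfl | rfl
    · exact hlt1.ne' (congrArg Prod.fst hz3)
    · rcases hz2 with h | h
      · exact huv.ne' h
      · exact hvw h
  · set t := ((φ u).1 + max (φ v).1 (φ w).1) / 2 with ht
    have hmax : max (φ v).1 (φ w).1 < (φ u).1 := max_lt h1 h2
    have hm1 : (φ v).1 ≤ max (φ v).1 (φ w).1 := le_max_left _ _
    have hm2 : (φ w).1 ≤ max (φ v).1 (φ w).1 := le_max_right _ _
    have hlt1 : t < (φ u).1 := by rw [ht]; linarith
    have hlt2 : (φ v).1 ≤ t := by rw [ht]; linarith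
    have hlt3 : (φ w).1 ≤ t := by rw [ht]; linarith
    have hp1 : (t, (φ u).2) ∈ segment ℝ (φ u) (c u v) := by
      have h := seg_horiz (y := (φ u).2) hlt2 hlt1.le
      rw [segment_symm, Prod.mk.eta] at h
      rw [hcv]; exact h
    have hp2 : (t, (φ u).2) ∈ segment ℝ (φ u) (c u w) := by
      have h := seg_horiz (y := (φ u).2) hlt3 hlt1.le
      rw [segment_symm, Prod.mk.eta] at h
      rw [hcw]; exact h
    obtain ⟨z, hz1, hz2, hz3⟩ := hcross u v u w huv huw hsne _ ⟨Or.inl hp1, Or.inl hp2⟩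
    rcases hz1 with rfl | rfl
    · exact hlt1.ne (congrArg Prod.fst hz3)
    · rcases hz2 with h | h
      · exact huv.ne' h
      · exact hvw h

lemma cross_contra (hemb : IsLEmbedding T13 S φ c) {u v a b : Fin 13}
    (huv : T13.Adj u v) (hab : T13.Adj a b)
    (h1 : u ≠ a) (h2 : u ≠ b) (h3 : v ≠ a) (h4 : v ≠ b)
    {p : ℝ × ℝ} (hp1 : p ∈ segment ℝ (φ u) (c u v))
    (hp2 : p ∈ segment ℝ (φ a) (c a b)) : False := by
  obtain ⟨-, -, -, -, hcross⟩ := hemb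
  have hsne : s(u, v) ≠ s(a, b) := by
    intro h
    rcases Sym2.eq_iff.mp h with ⟨h', -⟩ | ⟨h', -⟩
    · exact h1 h'
    · exact h2 h'
  obtain ⟨z, hz1, hz2, -⟩ := hcross u v a b huv hab hsne p ⟨Or.inl hp1, Or.inl hp2⟩
  rcases hz1 with rfl | rfl <;> rcases hz2 with h | h
  exacts [h1 h, h2 h, h3 h, h4 h]

end Clash

section Staircase
variable {box : Fin 7 → Finset (ℝ × ℝ)} {φ : Fin 13 → ℝ × ℝ} {c : Fin 13 → Fin 13 → ℝ × ℝ}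

lemma stair_ne (hbox : IsStaircase ![2,2,2,1,2,2,2] box) {i j : Fin 7} {p q : ℝ × ℝ}
    (hp : p ∈ box i) (hq : q ∈ box j) (hne : p ≠ q) : p.1 ≠ q.1 ∧ p.2 ≠ q.2 := by
  rcases lt_trichotomy i j with h | h | h
  · obtain ⟨a, b⟩ := hbox.2.2 i j h p hp q hq
    exact ⟨a.ne, b.ne'⟩
  · subst h
    obtain ⟨a, b⟩ := hbox.2.1 i p hp q hq hne
    obtain ⟨a', b'⟩ := hbox.2.1 i q hq p hp hne.symm
    rcases a.lt_or_gt with h' | h'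
    · exact ⟨a, (b.mp h').ne⟩
    · exact ⟨a, ((b'.mp h').ne).symm⟩
  · obtain ⟨a, b⟩ := hbox.2.2 j i h q hq p hp
    exact ⟨a.ne', b.ne⟩

lemma memBox (hemb : IsLEmbedding T13 (staircaseSet box) φ c) (v : Fin 13) :
    ∃ i, φ v ∈ box i := by
  have h := hemb.2.1 v
  rw [staircaseSet, Finset.mem_biUnion] at h
  obtain ⟨i, -, hi⟩ := h
  exact ⟨i, hi⟩

lemma phi_ne (hbox : IsStaircase ![2,2,2,1,2,2,2] box)
    (hemb : IsLEmbedding T13 (staircaseSet box) φ c) {v w : Fin 13} (h : v ≠ w) :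
    (φ v).1 ≠ (φ w).1 ∧ (φ v).2 ≠ (φ w).2 := by
  obtain ⟨i, hi⟩ := memBox hemb v
  obtain ⟨j, hj⟩ := memBox hemb w
  exact stair_ne hbox hi hj (fun hh => h (hemb.1 hh))

lemma alldirs_aux (hbox : IsStaircase ![2,2,2,1,2,2,2] box)
    (hemb : IsLEmbedding T13 (staircaseSet box) φ c)
    {a : Fin 13} {n : Fin 4 → Fin 13}
    (hadj : ∀ i, T13.Adj a (n i)) (hninj : Function.Injective n) :
    (∃ v, T13.Adj a v ∧ c a v = ((φ a).1, (φ v).2) ∧ (φ a).2 < (φ v).2) ∧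
    (∃ v, T13.Adj a v ∧ c a v = ((φ a).1, (φ v).2) ∧ (φ v).2 < (φ a).2) ∧
    (∃ v, T13.Adj a v ∧ c a v = ((φ v).1, (φ a).2) ∧ (φ v).1 < (φ a).1) ∧
    (∃ v, T13.Adj a v ∧ c a v = ((φ v).1, (φ a).2) ∧ (φ a).1 < (φ v).1) := by
  classical
  have hcor := hemb.2.2.2.1
  have hcoord : ∀ i : Fin 4, (φ (n i)).1 ≠ (φ a).1 ∧ (φ (n i)).2 ≠ (φ a).2 :=
    fun i => phi_ne hbox hemb (hadj i).ne'
  set f : Fin 4 → Fin 4 := fun i =>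
    if c a (n i) = ((φ a).1, (φ (n i)).2) then
      (if (φ a).2 < (φ (n i)).2 then 0 else 1)
    else
      (if (φ (n i)).1 < (φ a).1 then 2 else 3) with hf
  have hdec : ∀ i : Fin 4,
      (f i = 0 → c a (n i) = ((φ a).1, (φ (n i)).2) ∧ (φ a).2 < (φ (n i)).2) ∧
      (f i = 1 → c a (n i) = ((φ a).1, (φ (n i)).2) ∧ (φ (n i)).2 < (φ a).2) ∧
      (f i = 2 → c a (n i) = ((φ (n i)).1, (φ a).2) ∧ (φ (n i)).1 < (φ a).1) ∧
      (f i = 3 → c a (n i) = ((φ (n i)).1, (φ a).2) ∧ (φ a).1 < (φ (n i)).1) := by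
    intro i
    by_cases h1 : c a (n i) = ((φ a).1, (φ (n i)).2)
    · by_cases h2 : (φ a).2 < (φ (n i)).2
      · have hfi : f i = 0 := by rw [hf]; simp [h1, h2]
        refine ⟨fun _ => ⟨h1, h2⟩, fun h => ?_, fun h => ?_, fun h => ?_⟩ <;>
          (rw [hfi] at h; exact absurd h (by decide))
      · have h2' : (φ (n i)).2 < (φ a).2 := lt_of_le_of_ne (not_lt.mp h2) (hcoord i).2
        have hfi : f i = 1 := by rw [hf]; simp [h1, h2]
        refine ⟨fun h => ?_, fun _ => ⟨h1, h2'⟩, fun h => ?_, fun h => ?_⟩ <;>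
          (rw [hfi] at h; exact absurd h (by decide))
    · have h1' : c a (n i) = ((φ (n i)).1, (φ a).2) := by
        rcases hcor a (n i) (hadj i) with h | h
        · exact absurd h h1
        · exact h
      by_cases h2 : (φ (n i)).1 < (φ a).1
      · have hfi : f i = 2 := by rw [hf]; simp [h1, h2]
        refine ⟨fun h => ?_, fun h => ?_, fun _ => ⟨h1', h2⟩, fun h => ?_⟩ <;>
          (rw [hfi] at h; exact absurd h (by decide))
      · have h2' : (φ a).1 < (φ (n i)).1 := lt_of_le_of_ne (not_lt.mp h2) (hcoord i).1.symm
        have hfi : f i = 3 := by rw [hf]; simp [h1, h2]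
        refine ⟨fun h => ?_, fun h => ?_, fun h => ?_, fun _ => ⟨h1', h2'⟩⟩ <;>
          (rw [hfi] at h; exact absurd h (by decide))
  have hfinj : Function.Injective f := by
    intro i j hij
    by_contra hij'
    have hni : n i ≠ n j := fun hh => hij' (hninj hh)
    have h4 : ∀ k : Fin 4, k = 0 ∨ k = 1 ∨ k = 2 ∨ k = 3 := by decide
    rcases h4 (f i) with h | h | h | h
    · have hj : f j = 0 := hij ▸ h
      obtain ⟨c1, l1⟩ := (hdec i).1 h
      obtain ⟨c2, l2⟩ := (hdec j).1 hj
      exact clashV hemb (hadj i) (hadj j) hni c1 c2 (Or.inl ⟨l1, l2⟩)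
    · have hj : f j = 1 := hij ▸ h
      obtain ⟨c1, l1⟩ := (hdec i).2.1 h
      obtain ⟨c2, l2⟩ := (hdec j).2.1 hj
      exact clashV hemb (hadj i) (hadj j) hni c1 c2 (Or.inr ⟨l1, l2⟩)
    · have hj : f j = 2 := hij ▸ h
      obtain ⟨c1, l1⟩ := (hdec i).2.2.1 h
      obtain ⟨c2, l2⟩ := (hdec j).2.2.1 hj
      exact clashH hemb (hadj i) (hadj j) hni c1 c2 (Or.inr ⟨l1, l2⟩)
    · have hj : f j = 3 := hij ▸ h
      obtain ⟨c1, l1⟩ := (hdec i).2.2.2 h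
      obtain ⟨c2, l2⟩ := (hdec j).2.2.2 hj
      exact clashH hemb (hadj i) (hadj j) hni c1 c2 (Or.inl ⟨l1, l2⟩)
  have hfsurj : Function.Surjective f := Finite.injective_iff_surjective.mp hfinj
  obtain ⟨i0, hi0⟩ := hfsurj 0
  obtain ⟨i1, hi1⟩ := hfsurj 1
  obtain ⟨i2, hi2⟩ := hfsurj 2
  obtain ⟨i3, hi3⟩ := hfsurj 3
  exact ⟨⟨n i0, hadj i0, (hdec i0).1 hi0⟩,
         ⟨n i1, hadj i1, (hdec i1).2.1 hi1⟩,
         ⟨n i2, hadj i2, (hdec i2).2.2.1 hi2⟩,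
         ⟨n i3, hadj i3, (hdec i3).2.2.2 hi3⟩⟩

lemma alldirs (hbox : IsStaircase ![2,2,2,1,2,2,2] box)
    (hemb : IsLEmbedding T13 (staircaseSet box) φ c)
    {a : Fin 13} (ha : a = 1 ∨ a = 2 ∨ a = 3) :
    (∃ v, T13.Adj a v ∧ c a v = ((φ a).1, (φ v).2) ∧ (φ a).2 < (φ v).2) ∧
    (∃ v, T13.Adj a v ∧ c a v = ((φ a).1, (φ v).2) ∧ (φ v).2 < (φ a).2) ∧
    (∃ v, T13.Adj a v ∧ c a v = ((φ v).1, (φ a).2) ∧ (φ v).1 < (φ a).1) ∧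
    (∃ v, T13.Adj a v ∧ c a v = ((φ v).1, (φ a).2) ∧ (φ a).1 < (φ v).1) := by
  rcases ha with rfl | rfl | rfl
  · exact alldirs_aux hbox hemb (n := ![0, 4, 5, 6])
      (by intro i; fin_cases i <;> exact And.intro (by decide) (by decide)) (by decide)
  · exact alldirs_aux hbox hemb (n := ![0, 7, 8, 9])
      (by intro i; fin_cases i <;> exact And.intro (by decide) (by decide)) (by decide)
  · exact alldirs_aux hbox hemb (n := ![0, 10, 11, 12])
      (by intro i; fin_cases i <;> exact And.intro (by decide) (by decide)) (by decide)

end Staircase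

section NoX0
variable {box : Fin 7 → Finset (ℝ × ℝ)} {φ : Fin 13 → ℝ × ℝ} {c : Fin 13 → Fin 13 → ℝ × ℝ}

lemma card_box0 (hbox : IsStaircase ![2,2,2,1,2,2,2] box) : (box 0).card = 2 := by
  have h := hbox.1 0; simpa using h

lemma card_box1 (hbox : IsStaircase ![2,2,2,1,2,2,2] box) : (box 1).card = 2 := by
  have h := hbox.1 1; simpa using h

lemma noX0 (hbox : IsStaircase ![2,2,2,1,2,2,2] box)
    (hemb : IsLEmbedding T13 (staircaseSet box) φ c)
    {a : Fin 13} (ha : a = 1 ∨ a = 2 ∨ a = 3) : φ a ∉ box 0 := by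
  intro hX
  obtain ⟨hU, -, hL, -⟩ := alldirs hbox hemb ha
  obtain ⟨p, hap, hcp, hyp⟩ := hU
  obtain ⟨q, haq, hcq, hxq⟩ := hL
  obtain ⟨ip, hip⟩ := memBox hemb p
  obtain ⟨iq, hiq⟩ := memBox hemb q
  have hip0 : ip = 0 := by
    by_contra h
    have h0 : (0 : Fin 7) < ip := Fin.pos_of_ne_zero h
    have := (hbox.2.2 0 ip h0 (φ a) hX (φ p) hip).2
    linarith
  have hiq0 : iq = 0 := by
    by_contra h
    have h0 : (0 : Fin 7) < iq := Fin.pos_of_ne_zero h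
    have := (hbox.2.2 0 iq h0 (φ a) hX (φ q) hiq).1
    linarith
  subst hip0; subst hiq0
  have hpa : φ a ≠ φ p := fun h => hap.ne (hemb.1 h)
  have hqa : φ a ≠ φ q := fun h => haq.ne (hemb.1 h)
  have hxp : (φ a).1 < (φ p).1 :=
    ((hbox.2.1 0 (φ a) hX (φ p) hip hpa).2).mpr hyp
  have hpq : φ p ≠ φ q := by
    intro h
    rw [h] at hxp
    linarith
  have hsub : ({φ a, φ p, φ q} : Finset (ℝ × ℝ)) ⊆ box 0 := by
    intro x hx
    simp only [Finset.mem_insert, Finset.mem_singleton] at hx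
    rcases hx with rfl | rfl | rfl
    exacts [hX, hip, hiq]
  have hcard3 : ({φ a, φ p, φ q} : Finset (ℝ × ℝ)).card = 3 := by
    rw [Finset.card_insert_of_notMem (by simp [hpa, hqa]),
        Finset.card_insert_of_notMem (by simp [hpq]), Finset.card_singleton]
  have hle := Finset.card_le_card hsub
  rw [hcard3, card_box0 hbox] at hle
  omega

lemma threeSE (hemb : IsLEmbedding T13 (staircaseSet box) φ c) {u v w : Fin 13}
    (h0u : T13.Adj 0 u) (h0v : T13.Adj 0 v) (h0w : T13.Adj 0 w)
    (huv : u ≠ v) (huw : u ≠ w) (hvw : v ≠ w)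
    (hu : (φ 0).1 < (φ u).1 ∧ (φ u).2 < (φ 0).2)
    (hv : (φ 0).1 < (φ v).1 ∧ (φ v).2 < (φ 0).2)
    (hw : (φ 0).1 < (φ w).1 ∧ (φ w).2 < (φ 0).2) : False := by
  have hcor := hemb.2.2.2.1
  rcases hcor 0 u h0u with hcu | hcu <;> rcases hcor 0 v h0v with hcv | hcv
  · exact clashV hemb h0u h0v huv hcu hcv (Or.inr ⟨hu.2, hv.2⟩)
  · rcases hcor 0 w h0w with hcw | hcw
    · exact clashV hemb h0u h0w huw hcu hcw (Or.inr ⟨hu.2, hw.2⟩)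
    · exact clashH hemb h0v h0w hvw hcv hcw (Or.inl ⟨hv.1, hw.1⟩)
  · rcases hcor 0 w h0w with hcw | hcw
    · exact clashV hemb h0v h0w hvw hcv hcw (Or.inr ⟨hv.2, hw.2⟩)
    · exact clashH hemb h0u h0w huw hcu hcw (Or.inl ⟨hu.1, hw.1⟩)
  · exact clashH hemb h0u h0v huv hcu hcv (Or.inl ⟨hu.1, hv.1⟩)

end NoX0

section Final
variable {box : Fin 7 → Finset (ℝ × ℝ)} {φ : Fin 13 → ℝ × ℝ} {c : Fin 13 → Fin 13 → ℝ × ℝ}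

lemma final (hbox : IsStaircase ![2,2,2,1,2,2,2] box)
    (hemb : IsLEmbedding T13 (staircaseSet box) φ c)
    {a b r : Fin 13}
    (h0a : T13.Adj 0 a) (h0b : T13.Adj 0 b) (h0r : T13.Adj 0 r)
    (ha3 : a = 1 ∨ a = 2 ∨ a = 3)
    (hab : a ≠ b) (har : a ≠ r) (hbr : b ≠ r)
    (hnb : ∀ v, T13.Adj a v → v ≠ b ∧ v ≠ r)
    (hY1 : φ 0 ∈ box 1) (hA : φ a ∈ box 1)
    {jb jr : Fin 7} (hjb : φ b ∈ box jb) (h1jb : (1:Fin 7) < jb)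
    (hjr : φ r ∈ box jr) (h1jr : (1:Fin 7) < jr) : False := by
  have hcor := hemb.2.2.2.1
  have hsym := hemb.2.2.1
  have hinj := hemb.1
  have hφ0a : φ 0 ≠ φ a := fun h => h0a.ne (hinj h)
  have hb_se : (φ 0).1 < (φ b).1 ∧ (φ b).2 < (φ 0).2 := hbox.2.2 1 jb h1jb _ hY1 _ hjb
  have hr_se : (φ 0).1 < (φ r).1 ∧ (φ r).2 < (φ 0).2 := hbox.2.2 1 jr h1jr _ hY1 _ hjr
  have hpair : ∀ x, x ∈ box 1 → x = φ 0 ∨ x = φ a := by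
    have hsub : ({φ 0, φ a} : Finset (ℝ × ℝ)) ⊆ box 1 := by
      intro x hx
      simp only [Finset.mem_insert, Finset.mem_singleton] at hx
      rcases hx with rfl | rfl
      exacts [hY1, hA]
    have hcardp : ({φ 0, φ a} : Finset (ℝ × ℝ)).card = 2 := by
      rw [Finset.card_insert_of_notMem (by simp [hφ0a]), Finset.card_singleton]
    have heq := Finset.eq_of_subset_of_card_le hsub (by rw [card_box1 hbox, hcardp])
    intro x hx
    rw [← heq] at hx
    simpa using hx
  have hne0a := stair_ne hbox hY1 hA hφ0a
  rcases hne0a.1.lt_or_gt with hx | hx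
  · -- φ a is NE of φ 0
    have hy : (φ 0).2 < (φ a).2 := ((hbox.2.1 1 (φ 0) hY1 (φ a) hA hφ0a).2).mp hx
    have hc0a : c 0 a = ((φ 0).1, (φ a).2) := by
      rcases hcor 0 a h0a with h | h
      · exact h
      · exfalso
        rcases hcor 0 b h0b with hb' | hb'
        · rcases hcor 0 r h0r with hr' | hr'
          · exact clashV hemb h0b h0r hbr hb' hr' (Or.inr ⟨hb_se.2, hr_se.2⟩)
          · exact clashH hemb h0a h0r har h hr' (Or.inl ⟨hx, hr_se.1⟩)
        · exact clashH hemb h0a h0b hab h hb' (Or.inl ⟨hx, hb_se.1⟩)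
    have hrr : ∃ rr, T13.Adj 0 rr ∧ rr ≠ a ∧ (rr = b ∨ rr = r) ∧
        (∃ j, (1:Fin 7) < j ∧ φ rr ∈ box j) ∧ c 0 rr = ((φ rr).1, (φ 0).2) := by
      rcases hcor 0 b h0b with hb' | hb'
      · rcases hcor 0 r h0r with hr' | hr'
        · exact absurd (clashV hemb h0b h0r hbr hb' hr' (Or.inr ⟨hb_se.2, hr_se.2⟩)) id
        · exact ⟨r, h0r, fun h => har h.symm, Or.inr rfl, ⟨jr, h1jr, hjr⟩, hr'⟩
      · exact ⟨b, h0b, fun h => hab h.symm, Or.inl rfl, ⟨jb, h1jb, hjb⟩, hb'⟩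
    obtain ⟨rr, h0rr, hrra, hrrbr, ⟨jrr, h1jrr, hjrr⟩, hcrr⟩ := hrr
    obtain ⟨-, hD, -, -⟩ := alldirs hbox hemb ha3
    obtain ⟨v, hav, hcav, hyv⟩ := hD
    have hv0 : v ≠ 0 := by
      rintro rfl
      have h1 : c a 0 = c 0 a := hsym a 0
      rw [hcav, hc0a, Prod.mk.injEq] at h1
      exact hne0a.1 h1.1.symm
    have hva : v ≠ a := hav.ne'
    obtain ⟨jv, hjv⟩ := memBox hemb v
    have h1jv : (1:Fin 7) < jv := by
      rcases lt_trichotomy jv 1 with h | h | h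
      · exfalso
        have := (hbox.2.2 jv 1 h (φ v) hjv (φ a) hA).2
        linarith
      · exfalso
        rw [h] at hjv
        rcases hpair _ hjv with h' | h'
        · exact hv0 (hinj h')
        · exact hva (hinj h')
      · exact h
    have hyv0 : (φ v).2 < (φ 0).2 := (hbox.2.2 1 jv h1jv _ hY1 _ hjv).2
    have hxa_rr : (φ a).1 < (φ rr).1 := (hbox.2.2 1 jrr h1jrr _ hA _ hjrr).1
    have hp1 : ((φ a).1, (φ 0).2) ∈ segment ℝ (φ a) (c a v) := by
      rw [hcav]
      have h := seg_vert (x := (φ a).1) hyv0.le hy.le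
      rw [segment_symm, Prod.mk.eta] at h
      exact h
    have hp2 : ((φ a).1, (φ 0).2) ∈ segment ℝ (φ 0) (c 0 rr) := by
      rw [hcrr]
      have h := seg_horiz (y := (φ 0).2) hx.le hxa_rr.le
      rw [Prod.mk.eta] at h
      exact h
    have hvrr : v ≠ rr := by
      rcases hrrbr with rfl | rfl
      · exact (hnb v hav).1
      · exact (hnb v hav).2
    exact cross_contra hemb hav h0rr h0a.ne' hrra.symm hv0 hvrr hp1 hp2
  · -- φ a is SW of φ 0
    have hy : (φ a).2 < (φ 0).2 := ((hbox.2.1 1 (φ a) hA (φ 0) hY1 hφ0a.symm).2).mp hx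
    have hc0a : c 0 a = ((φ a).1, (φ 0).2) := by
      rcases hcor 0 a h0a with h | h
      · exfalso
        rcases hcor 0 b h0b with hb' | hb'
        · exact clashV hemb h0a h0b hab h hb' (Or.inr ⟨hy, hb_se.2⟩)
        · rcases hcor 0 r h0r with hr' | hr'
          · exact clashV hemb h0a h0r har h hr' (Or.inr ⟨hy, hr_se.2⟩)
          · exact clashH hemb h0b h0r hbr hb' hr' (Or.inl ⟨hb_se.1, hr_se.1⟩)
      · exact h
    have hdd : ∃ dd, T13.Adj 0 dd ∧ dd ≠ a ∧ (dd = b ∨ dd = r) ∧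
        (∃ j, (1:Fin 7) < j ∧ φ dd ∈ box j) ∧ c 0 dd = ((φ 0).1, (φ dd).2) := by
      rcases hcor 0 b h0b with hb' | hb'
      · exact ⟨b, h0b, fun h => hab h.symm, Or.inl rfl, ⟨jb, h1jb, hjb⟩, hb'⟩
      · rcases hcor 0 r h0r with hr' | hr'
        · exact ⟨r, h0r, fun h => har h.symm, Or.inr rfl, ⟨jr, h1jr, hjr⟩, hr'⟩
        · exact absurd (clashH hemb h0b h0r hbr hb' hr' (Or.inl ⟨hb_se.1, hr_se.1⟩)) id
    obtain ⟨dd, h0dd, hdda, hddbr, ⟨jdd, h1jdd, hjdd⟩, hcdd⟩ := hdd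
    obtain ⟨-, -, -, hR⟩ := alldirs hbox hemb ha3
    obtain ⟨v, hav, hcav, hxv⟩ := hR
    have hv0 : v ≠ 0 := by
      rintro rfl
      have h1 : c a 0 = c 0 a := hsym a 0
      rw [hcav, hc0a, Prod.mk.injEq] at h1
      exact hne0a.1 h1.1
    have hva : v ≠ a := hav.ne'
    obtain ⟨jv, hjv⟩ := memBox hemb v
    have h1jv : (1:Fin 7) < jv := by
      rcases lt_trichotomy jv 1 with h | h | h
      · exfalso
        have := (hbox.2.2 jv 1 h (φ v) hjv (φ a) hA).1
        linarith
      · exfalso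
        rw [h] at hjv
        rcases hpair _ hjv with h' | h'
        · exact hv0 (hinj h')
        · exact hva (hinj h')
      · exact h
    have hxv0 : (φ 0).1 < (φ v).1 := (hbox.2.2 1 jv h1jv _ hY1 _ hjv).1
    have hydd : (φ dd).2 < (φ a).2 := (hbox.2.2 1 jdd h1jdd _ hA _ hjdd).2
    have hp1 : ((φ 0).1, (φ a).2) ∈ segment ℝ (φ a) (c a v) := by
      rw [hcav]
      have h := seg_horiz (y := (φ a).2) hx.le hxv0.le
      rw [Prod.mk.eta] at h
      exact h
    have hp2 : ((φ 0).1, (φ a).2) ∈ segment ℝ (φ 0) (c 0 dd) := by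
      rw [hcdd]
      have h := seg_vert (x := (φ 0).1) hydd.le hy.le
      rw [segment_symm, Prod.mk.eta] at h
      exact h
    have hvdd : v ≠ dd := by
      rcases hddbr with rfl | rfl
      · exact (hnb v hav).1
      · exact (hnb v hav).2
    exact cross_contra hemb hav h0dd h0a.ne' hdda.symm hv0 hvdd hp1 hp2

end Final

section Core
variable {box : Fin 7 → Finset (ℝ × ℝ)} {φ : Fin 13 → ℝ × ℝ} {c : Fin 13 → Fin 13 → ℝ × ℝ}

lemma core (hbox : IsStaircase ![2,2,2,1,2,2,2] box)
    (hemb : IsLEmbedding T13 (staircaseSet box) φ c)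
    (hY : φ 0 ∈ box 0 ∨ φ 0 ∈ box 1) : False := by
  have h01 : T13.Adj 0 1 := And.intro (by decide) (by decide)
  have h02 : T13.Adj 0 2 := And.intro (by decide) (by decide)
  have h03 : T13.Adj 0 3 := And.intro (by decide) (by decide)
  obtain ⟨j1, hj1⟩ := memBox hemb 1
  obtain ⟨j2, hj2⟩ := memBox hemb 2
  obtain ⟨j3, hj3⟩ := memBox hemb 3
  have hn1 : j1 ≠ 0 := fun h => noX0 hbox hemb (Or.inl rfl) (h ▸ hj1)
  have hn2 : j2 ≠ 0 := fun h => noX0 hbox hemb (Or.inr (Or.inl rfl)) (h ▸ hj2)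
  have hn3 : j3 ≠ 0 := fun h => noX0 hbox hemb (Or.inr (Or.inr rfl)) (h ▸ hj3)
  rcases hY with hY0 | hY1
  · exact threeSE hemb h01 h02 h03 (by decide) (by decide) (by decide)
      (hbox.2.2 0 j1 (Fin.pos_of_ne_zero hn1) _ hY0 _ hj1)
      (hbox.2.2 0 j2 (Fin.pos_of_ne_zero hn2) _ hY0 _ hj2)
      (hbox.2.2 0 j3 (Fin.pos_of_ne_zero hn3) _ hY0 _ hj3)
  · have hpc : ∀ u v : Fin 13, u ≠ v → u ≠ 0 → v ≠ 0 →
        φ u ∈ box 1 → φ v ∈ box 1 → False := by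
      intro u v huv hu0 hv0 hu hv
      have h1 : φ 0 ≠ φ u := fun h => hu0 (hemb.1 h).symm
      have h2 : φ 0 ≠ φ v := fun h => hv0 (hemb.1 h).symm
      have h3 : φ u ≠ φ v := fun h => huv (hemb.1 h)
      have hsub : ({φ 0, φ u, φ v} : Finset (ℝ × ℝ)) ⊆ box 1 := by
        intro x hx
        simp only [Finset.mem_insert, Finset.mem_singleton] at hx
        rcases hx with rfl | rfl | rfl
        exacts [hY1, hu, hv]
      have hcard3 : ({φ 0, φ u, φ v} : Finset (ℝ × ℝ)).card = 3 := by
        rw [Finset.card_insert_of_notMem (by simp [h1, h2]),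
            Finset.card_insert_of_notMem (by simp [h3]), Finset.card_singleton]
      have hle := Finset.card_le_card hsub
      rw [hcard3, card_box1 hbox] at hle
      omega
    have hsplit : ∀ jk : Fin 7, jk ≠ 0 → jk = 1 ∨ (1:Fin 7) < jk := by decide
    rcases hsplit j1 hn1 with h1 | h1 <;> rcases hsplit j2 hn2 with h2 | h2 <;>
      rcases hsplit j3 hn3 with h3 | h3
    · exact hpc 1 2 (by decide) (by decide) (by decide) (h1 ▸ hj1) (h2 ▸ hj2)
    · exact hpc 1 2 (by decide) (by decide) (by decide) (h1 ▸ hj1) (h2 ▸ hj2)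
    · exact hpc 1 3 (by decide) (by decide) (by decide) (h1 ▸ hj1) (h3 ▸ hj3)
    · exact final hbox hemb h01 h02 h03 (Or.inl rfl) (by decide) (by decide) (by decide)
        (by intro v hv; refine ⟨?_, ?_⟩ <;> rintro rfl <;> exact absurd (And.right hv) (by decide))
        hY1 (h1 ▸ hj1) hj2 h2 hj3 h3
    · exact hpc 2 3 (by decide) (by decide) (by decide) (h2 ▸ hj2) (h3 ▸ hj3)
    · exact final hbox hemb h02 h01 h03 (Or.inr (Or.inl rfl)) (by decide) (by decide) (by decide)
        (by intro v hv; refine ⟨?_, ?_⟩ <;> rintro rfl <;> exact absurd (And.right hv) (by decide))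
        hY1 (h2 ▸ hj2) hj1 h1 hj3 h3
    · exact final hbox hemb h03 h01 h02 (Or.inr (Or.inr rfl)) (by decide) (by decide) (by decide)
        (by intro v hv; refine ⟨?_, ?_⟩ <;> rintro rfl <;> exact absurd (And.right hv) (by decide))
        hY1 (h3 ▸ hj3) hj1 h1 hj2 h2
    · have hij1 := hbox.2.2 1 j1 h1 _ hY1 _ hj1
      have hij2 := hbox.2.2 1 j2 h2 _ hY1 _ hj2
      have hij3 := hbox.2.2 1 j3 h3 _ hY1 _ hj3
      exact threeSE hemb h01 h02 h03 (by decide) (by decide) (by decide) hij1 hij2 hij3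

end Core

def revIdx : Fin 7 → Fin 7 := fun i => ⟨6 - i.1, by omega⟩

section Neg
variable {box : Fin 7 → Finset (ℝ × ℝ)} {φ : Fin 13 → ℝ × ℝ} {c : Fin 13 → Fin 13 → ℝ × ℝ}

lemma neg_staircase (hbox : IsStaircase ![2,2,2,1,2,2,2] box) :
    IsStaircase ![2,2,2,1,2,2,2] (fun j => (box (revIdx j)).image (fun p => -p)) := by
  refine ⟨?_, ?_, ?_⟩
  · intro i
    simp only []
    rw [Finset.card_image_of_injective _ neg_injective, hbox.1]
    revert i; decide
  · intro i p hp q hq hne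
    simp only [Finset.mem_image] at hp hq
    obtain ⟨p0, hp0, rfl⟩ := hp
    obtain ⟨q0, hq0, rfl⟩ := hq
    have hne0 : p0 ≠ q0 := fun h => hne (by rw [h])
    obtain ⟨h1, -⟩ := hbox.2.1 (revIdx i) p0 hp0 q0 hq0 hne0
    obtain ⟨-, h2'⟩ := hbox.2.1 (revIdx i) q0 hq0 p0 hp0 hne0.symm
    constructor
    · simpa [Prod.fst_neg, neg_inj] using h1
    · simpa [Prod.fst_neg, Prod.snd_neg, neg_lt_neg_iff] using h2'
  · intro i j hij p hp q hq
    simp only [Finset.mem_image] at hp hq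
    obtain ⟨p0, hp0, rfl⟩ := hp
    obtain ⟨q0, hq0, rfl⟩ := hq
    have hrev : revIdx j < revIdx i := by
      have hi := i.isLt
      have hj := j.isLt
      rw [Fin.lt_def] at hij ⊢
      simp only [revIdx]
      omega
    obtain ⟨h1, h2⟩ := hbox.2.2 _ _ hrev q0 hq0 p0 hp0
    constructor
    · simp only [Prod.fst_neg]
      linarith
    · simp only [Prod.snd_neg]
      linarith

lemma neg_emb (hemb : IsLEmbedding T13 (staircaseSet box) φ c) :
    IsLEmbedding T13 (staircaseSet (fun j => (box (revIdx j)).image (fun p => -p)))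
      (fun v => -(φ v)) (fun u v => -(c u v)) := by
  obtain ⟨hinj, hS, hsym, hcor, hcross⟩ := hemb
  refine ⟨fun u v h => hinj (neg_injective h), ?_, fun u v => by simp only []; rw [hsym], ?_, ?_⟩
  · intro v
    have h := hS v
    rw [staircaseSet, Finset.mem_biUnion] at h ⊢
    obtain ⟨j, -, hj⟩ := h
    have hrr : revIdx (revIdx j) = j := by
      have := j.isLt
      apply Fin.ext
      simp only [revIdx]
      omega
    exact ⟨revIdx j, Finset.mem_univ _,
      Finset.mem_image.mpr ⟨φ v, by rw [hrr]; exact hj, rfl⟩⟩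
  · intro u v huv
    rcases hcor u v huv with h | h
    · left; simp [h]
    · right; simp [h]
  · intro u v a b huv hab hsne p hp
    have hp' : -p ∈ LDraw φ c u v ∩ LDraw φ c a b := by
      constructor
      · rcases hp.1 with h | h
        · exact Or.inl (neg_seg h)
        · exact Or.inr (neg_seg h)
      · rcases hp.2 with h | h
        · exact Or.inl (neg_seg h)
        · exact Or.inr (neg_seg h)
    obtain ⟨w, hw1, hw2, hw3⟩ := hcross u v a b huv hab hsne _ hp'
    exact ⟨w, hw1, hw2, by simp only []; rw [← hw3, neg_neg]⟩

end Neg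


/-- In every L-shaped embedding of `T₁₃` in the `(2,2,2,1,2,2,2)`-staircase `S₁₃`,
the vertex `Y` (vertex `0`) is mapped to a point of one of the three middle boxes
`B₋₁, B₀, B₁` (boxes `2, 3, 4`). -/
theorem T13_Y_in_middle_boxes (box : Fin 7 → Finset (ℝ × ℝ))
    (hbox : IsStaircase ![2, 2, 2, 1, 2, 2, 2] box)
    (φ : Fin 13 → ℝ × ℝ) (c : Fin 13 → Fin 13 → ℝ × ℝ)
    (hemb : IsLEmbedding T13 (staircaseSet box) φ c) :
    φ 0 ∈ box 2 ∨ φ 0 ∈ box 3 ∨ φ 0 ∈ box 4 := by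
  obtain ⟨i, hi⟩ := memBox hemb 0
  have hsplit : ∀ j : Fin 7, j = 0 ∨ j = 1 ∨ j = 2 ∨ j = 3 ∨ j = 4 ∨ j = 5 ∨ j = 6 := by
    decide
  have hbox' := neg_staircase hbox
  have hemb' := neg_emb hemb
  rcases hsplit i with rfl | rfl | rfl | rfl | rfl | rfl | rfl
  · exact absurd (core hbox hemb (Or.inl hi)) id
  · exact absurd (core hbox hemb (Or.inr hi)) id
  · exact Or.inl hi
  · exact Or.inr (Or.inl hi)
  · exact Or.inr (Or.inr hi)
  · refine absurd (core hbox' hemb' (Or.inr ?_)) id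
    exact Finset.mem_image.mpr ⟨φ 0, by rw [show revIdx 1 = (5:Fin 7) by decide]; exact hi, rfl⟩
  · refine absurd (core hbox' hemb' (Or.inl ?_)) id
    exact Finset.mem_image.mpr ⟨φ 0, by rw [show revIdx 0 = (6:Fin 7) by decide]; exact hi, rfl⟩
end

section
/- For every natural number n ≥ 1, the path on n vertices admits an L-shaped embedding in every point set of n points. -/
/-- The path on `n` vertices: `i` and `j` are adjacent iff `|i - j| = 1`. -/
def pathG (n : ℕ) : SimpleGraph (Fin n) where
  Adj a b := a.val + 1 = b.val ∨ b.val + 1 = a.val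
  symm := ⟨fun a b h => h.symm⟩
  loopless := ⟨by intro a h; rcases h with h | h <;> omega⟩

/-- First coordinate of a point on a segment lies between the endpoints'. -/
lemma seg_fst {a b p : ℝ × ℝ} (h : p ∈ segment ℝ a b) : p.1 ∈ Set.uIcc a.1 b.1 := by
  obtain ⟨s, t, hs, ht, hst, rfl⟩ := h
  rw [← segment_eq_uIcc]
  exact ⟨s, t, hs, ht, hst, rfl⟩

/-- If a point on a segment has the same first coordinate as the first endpoint,
and the endpoints differ in first coordinate, the point is the first endpoint. -/
lemma seg_pin {a b p : ℝ × ℝ} (h : p ∈ segment ℝ a b) (hx : p.1 = a.1)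
    (hne : a.1 ≠ b.1) : p = a := by
  obtain ⟨s, t, hs, ht, hst, rfl⟩ := h
  have h1 : s * a.1 + t * b.1 = a.1 := hx
  have h2 : t * (b.1 - a.1) = 0 := by linear_combination h1 - a.1 * hst
  have ht0 : t = 0 := by
    rcases mul_eq_zero.mp h2 with h' | h'
    · exact h'
    · exact absurd (by linarith) hne
  have hs1 : s = 1 := by linarith
  simp [ht0, hs1]

/-- For every `n ≥ 1`, the path on `n` vertices admits an L-shaped embedding in
every point set of `n` points. -/
theorem path_embeds (n : ℕ) (hn : 1 ≤ n)
    (S : Finset (ℝ × ℝ)) (hS : IsPointSet S) (hcard : S.card = n) :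
    HasLEmbedding (pathG n) S := by
  classical
  have hinj : Set.InjOn Prod.fst (S : Set (ℝ × ℝ)) := by
    intro p hp q hq h
    by_contra hne
    exact (hS p hp q hq hne).1 h
  set T := S.image Prod.fst with hT
  have hTcard : T.card = n := by
    rw [hT, Finset.card_image_of_injOn hinj, hcard]
  set f := T.orderIsoOfFin hTcard with hf
  have hex : ∀ i : Fin n, ∃ p, p ∈ S ∧ p.1 = (f i : ℝ) := by
    intro i
    obtain ⟨p, hp, hp1⟩ := Finset.mem_image.mp (f i).2
    exact ⟨p, hp, hp1⟩
  choose φ hφS hφx using hex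
  have hx : ∀ i j : Fin n, i.val < j.val → (φ i).1 < (φ j).1 := by
    intro i j hij
    rw [hφx i, hφx j]
    have : f i < f j := f.strictMono (Fin.lt_def.mpr hij)
    exact_mod_cast this
  have hφinj : Function.Injective φ := by
    intro i j h
    by_contra hne
    have hne' : i.val ≠ j.val := fun hv => hne (Fin.ext hv)
    rcases lt_or_gt_of_ne hne' with h' | h'
    · exact absurd (congrArg Prod.fst h) (ne_of_lt (hx _ _ h'))
    · exact absurd (congrArg Prod.fst h).symm (ne_of_lt (hx _ _ h'))
  set c : Fin n → Fin n → ℝ × ℝ := fun u v => ((φ (max u v)).1, (φ (min u v)).2) with hc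
  have hcsymm : ∀ u v, c u v = c v u := by
    intro u v; simp only [hc, max_comm, min_comm]
  have hcedge : ∀ i j : Fin n, i.val + 1 = j.val → c i j = ((φ j).1, (φ i).2) := by
    intro i j hij
    have hle : i ≤ j := by rw [Fin.le_def]; omega
    simp only [hc, max_eq_right hle, min_eq_left hle]
  -- range of an edge drawing
  have aux1 : ∀ i j : Fin n, i.val + 1 = j.val → ∀ p ∈ LDraw φ c i j,
      (φ i).1 ≤ p.1 ∧ p.1 ≤ (φ j).1 := by
    intro i j hij p hp
    have hxlt : (φ i).1 < (φ j).1 := hx i j (by omega)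
    rw [LDraw, hcedge i j hij] at hp
    rcases hp with hp | hp
    · have := seg_fst hp
      rw [Set.uIcc_of_le (le_of_lt hxlt)] at this
      exact ⟨this.1, this.2⟩
    · have := seg_fst hp
      simp only [Set.uIcc_self, Set.mem_singleton_iff] at this
      rw [this]
      exact ⟨le_of_lt hxlt, le_refl _⟩
  -- pinning at the left endpoint
  have aux2 : ∀ i j : Fin n, i.val + 1 = j.val → ∀ p ∈ LDraw φ c i j,
      p.1 = (φ i).1 → p = φ i := by
    intro i j hij p hp hpx
    have hxlt : (φ i).1 < (φ j).1 := hx i j (by omega)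
    rw [LDraw, hcedge i j hij] at hp
    rcases hp with hp | hp
    · exact seg_pin hp hpx (ne_of_lt hxlt)
    · have := seg_fst hp
      simp only [Set.uIcc_self, Set.mem_singleton_iff] at this
      rw [hpx] at this
      exact absurd this (ne_of_lt hxlt)
  have hLcomm : ∀ u v, LDraw φ c u v = LDraw φ c v u := by
    intro u v
    rw [LDraw, LDraw, hcsymm u v, Set.union_comm]
    congr 1 <;> rw [segment_symm]
  -- main crossing lemma for normalized edges
  have aux3 : ∀ i i2 j j2 : Fin n, i.val + 1 = i2.val → j.val + 1 = j2.val →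
      i.val < j.val → ∀ p, p ∈ LDraw φ c i i2 → p ∈ LDraw φ c j j2 →
      p = φ j ∧ i2 = j := by
    intro i i2 j j2 hi hj hij p hp1 hp2
    obtain ⟨h1, h2⟩ := aux1 i i2 hi p hp1
    obtain ⟨h3, h4⟩ := aux1 j j2 hj p hp2
    have hle : i2.val ≤ j.val := by omega
    have heq : i2 = j := by
      rcases lt_or_eq_of_le hle with h' | h'
      · exact absurd (lt_of_le_of_lt h2 (lt_of_lt_of_le (hx i2 j h') h3)) (lt_irrefl _)
      · exact Fin.ext h'
    subst heq
    have hpx : p.1 = (φ i2).1 := le_antisymm h2 h3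
    exact ⟨aux2 i2 j2 hj p hp2 hpx, rfl⟩
  -- normalized form of an edge
  have norm : ∀ u v : Fin n, (pathG n).Adj u v →
      ∃ i j : Fin n, i.val + 1 = j.val ∧ ((i = u ∧ j = v) ∨ (i = v ∧ j = u)) := by
    rintro u v (h | h)
    · exact ⟨u, v, h, Or.inl ⟨rfl, rfl⟩⟩
    · exact ⟨v, u, h, Or.inr ⟨rfl, rfl⟩⟩
  refine ⟨φ, c, hφinj, hφS, hcsymm, ?_, ?_⟩
  · rintro u v (h | h)
    · exact Or.inr (hcedge u v h)
    · rw [hcsymm]; exact Or.inl (hcedge v u h)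
  · intro u v a b huv hab hne p hp
    obtain ⟨i, i2, hi, hiuv⟩ := norm u v huv
    obtain ⟨j, j2, hj, hjab⟩ := norm a b hab
    have e1 : LDraw φ c u v = LDraw φ c i i2 := by
      rcases hiuv with ⟨h1, h2⟩ | ⟨h1, h2⟩
      · rw [h1, h2]
      · rw [h1, h2]; exact hLcomm u v
    have e2 : LDraw φ c a b = LDraw φ c j j2 := by
      rcases hjab with ⟨h1, h2⟩ | ⟨h1, h2⟩
      · rw [h1, h2]
      · rw [h1, h2]; exact hLcomm a b
    rw [Set.mem_inter_iff, e1, e2] at hp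
    have hsuv : s(u, v) = s(i, i2) := by
      rcases hiuv with ⟨h1, h2⟩ | ⟨h1, h2⟩
      · rw [h1, h2]
      · rw [h1, h2]; exact Sym2.eq_swap
    have hsab : s(a, b) = s(j, j2) := by
      rcases hjab with ⟨h1, h2⟩ | ⟨h1, h2⟩
      · rw [h1, h2]
      · rw [h1, h2]; exact Sym2.eq_swap
    have hij : i.val ≠ j.val := by
      intro h
      have hij' : i = j := Fin.ext h
      have hij2 : i2 = j2 := Fin.ext (by omega)
      rw [hij', hij2] at hsuv
      exact hne (hsuv.trans hsab.symm)
    rcases lt_or_gt_of_ne hij with h' | h'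
    · obtain ⟨hpφ, hw⟩ := aux3 i i2 j j2 hi hj h' p hp.1 hp.2
      refine ⟨i2, ?_, ?_, by rw [hw]; exact hpφ⟩
      · rcases hiuv with ⟨h1, h2⟩ | ⟨h1, h2⟩
        · exact Or.inr h2
        · exact Or.inl h2
      · rcases hjab with ⟨h1, h2⟩ | ⟨h1, h2⟩
        · exact Or.inl (hw.trans h1)
        · exact Or.inr (hw.trans h1)
    · obtain ⟨hpφ, hw⟩ := aux3 j j2 i i2 hj hi h' p hp.2 hp.1
      refine ⟨j2, ?_, ?_, by rw [hw]; exact hpφ⟩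
      · rcases hiuv with ⟨h1, h2⟩ | ⟨h1, h2⟩
        · exact Or.inl (hw.trans h1)
        · exact Or.inr (hw.trans h1)
      · rcases hjab with ⟨h1, h2⟩ | ⟨h1, h2⟩
        · exact Or.inr h2
        · exact Or.inl h2
end
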